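/- arXiv:1203.0047 — 9 statements merged into one kernel-verified Lean document; each statement's English description precedes it below -/
import Mathlib

section
/- Let A ∈ ℝ^{n×n} be a Metzler matrix. Then A is Hurwitz if and only if there exists a vector ξ ∈ ℝ^n with ξ > 0 (all entries positive) such that Aξ < 0 (all entries of Aξ negative). Equivalently (applying the statement to Aᵀ), A is Hurwitz if and only if there exists z ∈ ℝ^n with z > 0 such that Aᵀz < 0. -/
open Matrix

/-- A real square matrix is *Metzler* if all its off-diagonal entries are nonnegative. -/
def Matrix.Metzler {n : ℕ} (A : Matrix (Fin n) (Fin n) ℝ) : Prop :=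
  ∀ i j, i ≠ j → 0 ≤ A i j

/-- A real square matrix is *Hurwitz* if every (complex) eigenvalue has negative real part. -/
def Matrix.Hurwitz {n : ℕ} (A : Matrix (Fin n) (Fin n) ℝ) : Prop :=
  ∀ μ ∈ spectrum ℂ (A.map (Complex.ofReal)), μ.re < 0

/-- A real square matrix is *Schur stable* if every (complex) eigenvalue lies strictly
inside the unit circle. -/
def Matrix.SchurStable {n : ℕ} (A : Matrix (Fin n) (Fin n) ℝ) : Prop :=
  ∀ μ ∈ spectrum ℂ (A.map (Complex.ofReal)), ‖μ‖ < 1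

/-!
If `ξ > 0` and `A ξ < 0`, then `D⁻¹ A D` with `D = diag ξ` has negative diagonal entries and
strictly dominant rows, so Gershgorin's theorem puts the spectrum of `A` in the open left
half-plane.

Conversely, if `A` is Hurwitz, then for small `t > 0` the matrix `C = 1 + t A` is entrywise
nonnegative with spectrum inside the unit disc, so `C ^ N → 0` by Gelfand's formula. The vector
`ξ = (1 + C + ⋯ + C ^ (N - 1)) 𝟙` satisfies `ξ ≥ 𝟙` and `-t A ξ = (1 - C) ξ = 𝟙 - C ^ N 𝟙`,
which is positive once `N` is large.

The transposed statement holds because `Aᵀ` is again Metzler and has the spectrum of `A`.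
-/

open Filter Topology

open scoped Pointwise in
theorem spectrum.one_add_smul {R A : Type*} [Field R] [Ring A] [Algebra R A] (a : A) {t : R}
    (ht : t ≠ 0) : spectrum R (1 + t • a) = (fun μ => 1 + t * μ) '' spectrum R a := by
  have h := spectrum.singleton_add_eq (Units.mk0 t ht • a) (1 : R)
  rw [map_one, spectrum.unit_smul_eq_smul, Set.singleton_add, Units.smul_def, Units.val_mk0,
    ← Set.image_smul, Set.image_image] at h
  exact h.symm

theorem tendsto_pow_atTop_nhds_zero_of_spectralRadius_lt_one {A : Type*} [NormedRing A]
    [NormedAlgebra ℂ A] [CompleteSpace A] {a : A} (ha : spectralRadius ℂ a < 1) :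
    Tendsto (a ^ ·) atTop (𝓝 0) := by
  obtain ⟨r, hρr, hr1⟩ := ENNReal.lt_iff_exists_nnreal_btwn.mp ha
  have hbound : ∀ᶠ k : ℕ in atTop, ‖a ^ k‖ ≤ (r : ℝ) ^ k := by
    filter_upwards [(spectrum.pow_nnnorm_pow_one_div_tendsto_nhds_spectralRadius a)
      |>.eventually_lt_const hρr, eventually_gt_atTop 0] with k hk hk0
    rw [one_div, ENNReal.rpow_inv_lt_iff (by positivity), ENNReal.rpow_natCast] at hk
    exact_mod_cast hk.le
  exact squeeze_zero_norm' hbound (tendsto_pow_atTop_nhds_zero_of_lt_one r.2 (mod_cast hr1))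

theorem eigenvalue_mem_weighted_ball {K n : Type*} [NormedField K] [Fintype n] [DecidableEq n]
    {A : Matrix n n K} {d : n → K} (hd : ∀ i, d i ≠ 0) {μ : K} (hμ : μ ∈ spectrum K A) :
    ∃ k, μ ∈ Metric.closedBall (A k k) (∑ j ∈ Finset.univ.erase k, ‖A k j‖ * ‖d j‖ / ‖d k‖) := by
  let u : (Matrix n n K)ˣ :=
    { val := diagonal d
      inv := diagonal fun i => (d i)⁻¹
      val_inv := by simp [diagonal_mul_diagonal, hd]
      inv_val := by simp [diagonal_mul_diagonal, hd] }
  rw [← spectrum.units_conjugate' (u := u), ← spectrum_toLin',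
    ← Module.End.hasEigenvalue_iff_mem_spectrum] at hμ
  obtain ⟨k, hk⟩ := eigenvalue_mem_ball hμ
  refine ⟨k, ?_⟩
  convert hk using 2
  · simp [u, diagonal_mul, mul_diagonal, mul_right_comm _ (A k k), inv_mul_cancel₀ (hd k)]
  · refine Finset.sum_congr rfl fun j _ => ?_
    simp [u, diagonal_mul, mul_diagonal, div_eq_inv_mul, mul_comm, mul_left_comm]

theorem Matrix.spectrum_transpose {n R : Type*} [Fintype n] [DecidableEq n] [CommRing R]
    (A : Matrix n n R) : spectrum R Aᵀ = spectrum R A := by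
  ext μ
  simp only [spectrum.mem_iff, isUnit_iff_isUnit_det]
  rw [← det_transpose (_ - A), transpose_sub, algebraMap_eq_diagonal, diagonal_transpose]

theorem Matrix.exists_pos_one_sub_mulVec_pos {ι : Type*} [Fintype ι] [DecidableEq ι]
    {C : Matrix ι ι ℝ} (hC : ∀ i j, 0 ≤ C i j) (hlim : Tendsto (C ^ ·) atTop (𝓝 0)) :
    ∃ ξ : ι → ℝ, (∀ i, 0 < ξ i) ∧ ∀ i, 0 < ((1 - C) *ᵥ ξ) i := by
  have hlim1 : Tendsto (fun N => C ^ N *ᵥ (1 : ι → ℝ)) atTop (𝓝 0) :=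
    ((continuous_id.matrix_mulVec continuous_const).tendsto' 0 0 (zero_mulVec _)).comp hlim
  obtain ⟨N, hN, hN1⟩ := ((eventually_all.2 fun i =>
    (tendsto_pi_nhds.1 hlim1 i).eventually (gt_mem_nhds one_pos)).and
    (eventually_ge_atTop 1)).exists
  refine ⟨(∑ k ∈ Finset.range N, C ^ k) *ᵥ 1, fun i => ?_, fun i => ?_⟩
  · rw [sum_mulVec, Finset.sum_apply]
    calc (0 : ℝ) < (C ^ 0 *ᵥ 1) i := by simp
      _ ≤ ∑ k ∈ Finset.range N, (C ^ k *ᵥ 1) i :=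
        Finset.single_le_sum (fun k _ => Finset.sum_nonneg fun j _ =>
          mul_nonneg (pow_apply_nonneg hC k i j) zero_le_one) (Finset.mem_range.2 hN1)
  · rw [mulVec_mulVec, mul_neg_geom_sum, sub_mulVec, one_mulVec, Pi.sub_apply, Pi.one_apply]
    exact sub_pos.2 (hN i)

theorem Complex.eventually_norm_one_add_mul_lt_one {μ : ℂ} (hμ : μ.re < 0) :
    ∀ᶠ t : ℝ in 𝓝[>] 0, ‖1 + t * μ‖ < 1 := by
  have hμ0 : 0 < normSq μ := normSq_pos.2 (by rintro rfl; simp at hμ)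
  filter_upwards [Ioo_mem_nhdsGT (div_pos (neg_pos.2 hμ) hμ0)] with t ⟨ht0, htδ⟩
  rw [lt_div_iff₀ hμ0, normSq_apply] at htδ
  rw [← sq_lt_one_iff₀ (norm_nonneg _), Complex.sq_norm, normSq_apply]
  simp only [add_re, one_re, re_ofReal_mul, add_im, one_im, im_ofReal_mul, zero_add]
  nlinarith

namespace Matrix

variable {n : ℕ} {A C : Matrix (Fin n) (Fin n) ℝ}

theorem SchurStable.tendsto_pow (hC : C.SchurStable) : Tendsto (C ^ ·) atTop (𝓝 0) := by
  have hCℂ : Tendsto (C.map Complex.ofReal ^ ·) atTop (𝓝 0) := by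
    cases isEmpty_or_nonempty (Fin n)
    · exact tendsto_const_nhds.congr fun _ => Subsingleton.elim _ _
    -- Matrices carry no global norm; the `ℓ∞` operator norm makes them a Banach algebra.
    let _ := Matrix.linftyOpNormedRing (n := Fin n) (α := ℂ)
    let _ := Matrix.linftyOpNormedAlgebra (n := Fin n) (R := ℂ) (α := ℂ)
    refine tendsto_pow_atTop_nhds_zero_of_spectralRadius_lt_one ?_
    exact_mod_cast spectrum.spectralRadius_lt_of_forall_lt _ fun μ hμ => by
      exact_mod_cast hC μ hμ
  have hre : Continuous fun M : Matrix (Fin n) (Fin n) ℂ => M.map Complex.re :=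
    continuous_id.matrix_map Complex.continuous_re
  convert (hre.tendsto 0).comp hCℂ using 1
  · ext k i j
    have : C.map Complex.ofReal ^ k = (C ^ k).map Complex.ofReal :=
      (map_pow Complex.ofRealHom.mapMatrix C k).symm
    simp [this]
  · simp

theorem Hurwitz.eventually_schurStable_one_add_smul (hA : A.Hurwitz) :
    ∀ᶠ t : ℝ in 𝓝[>] 0, (1 + t • A).SchurStable := by
  filter_upwards [(A.map Complex.ofReal).finite_spectrum.eventually_all.2
    fun μ hμ => Complex.eventually_norm_one_add_mul_lt_one (hA μ hμ), self_mem_nhdsWithin]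
    with t ht (ht0 : 0 < t)
  have hmap : (1 + t • A).map Complex.ofReal = 1 + (t : ℂ) • A.map Complex.ofReal := by
    ext i j; by_cases h : i = j <;> simp [h]
  intro ν hν
  rw [hmap, spectrum.one_add_smul _ (Complex.ofReal_ne_zero.2 ht0.ne')] at hν
  obtain ⟨μ, hμ, rfl⟩ := hν
  exact ht μ hμ

theorem hurwitz_transpose : Aᵀ.Hurwitz ↔ A.Hurwitz := by
  rw [Hurwitz, Hurwitz, transpose_map, spectrum_transpose]

theorem Metzler.transpose (hA : A.Metzler) : Aᵀ.Metzler :=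
  fun i j hij => hA j i hij.symm

theorem Metzler.eventually_nonneg_one_add_smul (hA : A.Metzler) :
    ∀ᶠ t : ℝ in 𝓝[>] 0, ∀ i j, 0 ≤ (1 + t • A) i j := by
  simp only [eventually_all]
  intro i j
  rcases eq_or_ne i j with rfl | hij
  · have hlim : Tendsto (fun t : ℝ => 1 + t * A i i) (𝓝 0) (𝓝 1) := by
      simpa using ((tendsto_id (x := 𝓝 (0 : ℝ))).mul_const (A i i)).const_add 1
    filter_upwards [nhdsWithin_le_nhds (hlim.eventually (lt_mem_nhds one_pos))] with t ht
    simpa using ht.le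
  · filter_upwards [self_mem_nhdsWithin] with t (ht : 0 < t)
    simpa [one_apply_ne hij] using mul_nonneg ht.le (hA i j hij)

theorem Metzler.exists_pos_mulVec_neg_of_hurwitz (hA : A.Metzler) (hH : A.Hurwitz) :
    ∃ ξ : Fin n → ℝ, (∀ i, 0 < ξ i) ∧ ∀ i, (A *ᵥ ξ) i < 0 := by
  obtain ⟨t, ht : 0 < t, hC, hCs⟩ := (eventually_mem_nhdsWithin.and
    (hA.eventually_nonneg_one_add_smul.and hH.eventually_schurStable_one_add_smul)).exists
  obtain ⟨ξ, hξ, hCξ⟩ := exists_pos_one_sub_mulVec_pos hC hCs.tendsto_pow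
  refine ⟨ξ, hξ, fun i => ?_⟩
  have hAξ : ((1 - (1 + t • A)) *ᵥ ξ) i = -(t * (A *ᵥ ξ) i) := by
    simp [neg_mulVec, smul_mulVec]
  have := hCξ i
  rw [hAξ, neg_pos] at this
  exact neg_of_mul_neg_right this (le_of_lt ht)

theorem Metzler.hurwitz_of_pos_of_mulVec_neg (hA : A.Metzler) {ξ : Fin n → ℝ}
    (hξ : ∀ i, 0 < ξ i) (hAξ : ∀ i, (A *ᵥ ξ) i < 0) : A.Hurwitz := by
  intro μ hμ
  obtain ⟨k, hk⟩ := eigenvalue_mem_weighted_ball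
    (fun i => Complex.ofReal_ne_zero.2 (hξ i).ne') hμ
  have hradius : ∑ j ∈ Finset.univ.erase k, ‖(A k j : ℂ)‖ * ‖(ξ j : ℂ)‖ / ‖(ξ k : ℂ)‖
      = (∑ j ∈ Finset.univ.erase k, A k j * ξ j) / ξ k := by
    rw [Finset.sum_div]
    refine Finset.sum_congr rfl fun j hj => ?_
    simp [abs_of_pos (hξ _), abs_of_nonneg (hA k j (Finset.ne_of_mem_erase hj).symm)]
  have hrow : ∑ j ∈ Finset.univ.erase k, A k j * ξ j < -A k k * ξ k := by
    have := hAξ k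
    rw [mulVec, dotProduct, ← Finset.add_sum_erase _ _ (Finset.mem_univ k)] at this
    linarith
  simp only [Metric.mem_closedBall, dist_eq_norm, map_apply] at hk
  rw [hradius, le_div_iff₀ (hξ k)] at hk
  have hnorm : ‖μ - A k k‖ < -A k k := lt_of_mul_lt_mul_right (hk.trans_lt hrow) (hξ k).le
  have hre : μ.re - A k k ≤ ‖μ - A k k‖ := by simpa using Complex.re_le_norm (μ - A k k)
  linarith

theorem Metzler.hurwitz_iff_exists_pos_mulVec_neg (hA : A.Metzler) :
    A.Hurwitz ↔ ∃ ξ : Fin n → ℝ, (∀ i, 0 < ξ i) ∧ ∀ i, (A *ᵥ ξ) i < 0 :=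
  ⟨hA.exists_pos_mulVec_neg_of_hurwitz,
    fun ⟨_, hξ, hAξ⟩ => hA.hurwitz_of_pos_of_mulVec_neg hξ hAξ⟩

end Matrix

/-- A Metzler matrix `A` is Hurwitz iff there is an entrywise positive vector `ξ` with
`Aξ < 0` entrywise; equivalently (applying this to `Aᵀ`), iff there is an entrywise
positive `z` with `Aᵀz < 0` entrywise. -/
theorem metzler_hurwitz_iff_exists_pos_vec {n : ℕ} (A : Matrix (Fin n) (Fin n) ℝ)
    (hA : A.Metzler) :
    (A.Hurwitz ↔ ∃ ξ : Fin n → ℝ, (∀ i, 0 < ξ i) ∧ ∀ i, (A *ᵥ ξ) i < 0) ∧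
    (A.Hurwitz ↔ ∃ z : Fin n → ℝ, (∀ i, 0 < z i) ∧ ∀ i, (Aᵀ *ᵥ z) i < 0) :=
  ⟨hA.hurwitz_iff_exists_pos_mulVec_neg,
    hurwitz_transpose.symm.trans hA.transpose.hurwitz_iff_exists_pos_mulVec_neg⟩
end

section
/- Let A ∈ ℝ^{n×n} be a Metzler matrix. Then A is Hurwitz if and only if A is invertible and −A⁻¹ has all entries nonnegative. -/
/-!
Write `R σ = (σ • 1 - A)⁻¹`. If `A` is Hurwitz, `σ • 1 - A` is invertible for every real `σ ≥ 0`.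
Pick `c` with `A + c • 1 ≥ 0`; for large `σ`, `R σ` is a convergent Neumann series of nonnegative
matrices. The resolvent identity `R σ = (1 - (τ - σ) R τ)⁻¹ R τ` carries nonnegativity from `τ`
to every `σ` slightly below `τ`, and since `R` is continuous on `[0, ∞)` and the nonnegative
matrices form a closed set, continuous induction carries it down to `R 0 = -A⁻¹`.

Conversely, if `A v = μ v` with `v ≠ 0`, the triangle inequality gives
`‖μ + c‖ |v| ≤ (A + c • 1) |v|`. If `‖μ + c‖ ≥ c` this says `-A |v| ≤ 0`, and applying `-A⁻¹ ≥ 0`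
forces `|v| = 0`. Hence `Re μ + c ≤ ‖μ + c‖ < c`.
-/

open Matrix

open Filter Topology Set

namespace Matrix

def Nonneg {m n : Type*} (M : Matrix m n ℝ) : Prop := ∀ i j, 0 ≤ M i j

section Nonneg

variable {l m n : Type*}

theorem Nonneg.mul [Fintype m] {M : Matrix l m ℝ} {N : Matrix m n ℝ} (hM : M.Nonneg)
    (hN : N.Nonneg) : (M * N).Nonneg :=
  fun i j => Finset.sum_nonneg fun k _ => mul_nonneg (hM i k) (hN k j)

theorem Nonneg.smul {M : Matrix m n ℝ} (hM : M.Nonneg) {c : ℝ} (hc : 0 ≤ c) : (c • M).Nonneg :=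
  fun i j => mul_nonneg hc (hM i j)

theorem nonneg_one [DecidableEq n] : (1 : Matrix n n ℝ).Nonneg := fun i j => by
  rw [one_apply]; split_ifs <;> norm_num

theorem Nonneg.pow [Fintype n] [DecidableEq n] {M : Matrix n n ℝ} (hM : M.Nonneg) (k : ℕ) :
    (M ^ k).Nonneg := by
  induction k with
  | zero => exact pow_zero M ▸ nonneg_one
  | succ k ih => exact pow_succ M k ▸ ih.mul hM

theorem isClosed_setOf_nonneg : IsClosed {M : Matrix m n ℝ | M.Nonneg} := by
  simp only [Nonneg, ofPred_forall]
  exact isClosed_iInter fun i => isClosed_iInter fun j =>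
    isClosed_le continuous_const ((continuous_apply j).comp (continuous_apply i))

theorem Nonneg.mulVec_nonpos [Fintype n] {M : Matrix m n ℝ} (hM : M.Nonneg) {v : n → ℝ}
    (hv : v ≤ 0) : M *ᵥ v ≤ 0 :=
  fun i => Finset.sum_nonpos fun j _ => mul_nonpos_of_nonneg_of_nonpos (hM i j) (hv j)

end Nonneg

section Neumann

attribute [local instance] Matrix.linftyOpNormedRing Matrix.linftyOpNormedAlgebra

variable {n : Type*} [Fintype n] [DecidableEq n]

theorem Nonneg.nonneg_inv_one_sub {X : Matrix n n ℝ} (hX : X.Nonneg) (h : ‖X‖ < 1) :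
    (1 - X)⁻¹.Nonneg := by
  have hsum : HasSum (fun k : ℕ => X ^ k) (∑' k : ℕ, X ^ k) :=
    (summable_geometric_of_norm_lt_one h).hasSum
  rw [nonsing_inv_eq_ringInverse, ← geom_series_eq_inverse X h]
  intro i j
  exact (Pi.hasSum.mp (Pi.hasSum.mp hsum i) j).nonneg fun k => (hX.pow k) i j

theorem eventually_nhdsLT_nonneg_inv_smul_one_sub {A : Matrix n n ℝ} {τ : ℝ}
    (hτ : IsUnit (τ • 1 - A)) (hR : (τ • 1 - A)⁻¹.Nonneg) :
    ∀ᶠ σ in 𝓝[<] τ, (σ • 1 - A)⁻¹.Nonneg := by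
  set R := (τ • 1 - A)⁻¹
  set δ := (‖R‖ + 1)⁻¹
  have hδ : 0 < δ := by positivity
  filter_upwards [Ioo_mem_nhdsLT (sub_lt_self τ hδ)] with σ ⟨hσ, hστ⟩
  set X := (τ - σ) • R
  have hX : X.Nonneg := hR.smul (sub_nonneg.2 hστ.le)
  have hXnorm : ‖X‖ < 1 := calc
    ‖X‖ ≤ (τ - σ) * ‖R‖ := by
      simpa [abs_of_pos (sub_pos.2 hστ)] using norm_smul_le (τ - σ) R
    _ ≤ (τ - σ) * (‖R‖ + 1) := by gcongr; linarith
    _ < δ * (‖R‖ + 1) := by gcongr; linarith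
    _ = 1 := inv_mul_cancel₀ (by positivity)
  have hfactor : σ • 1 - A = (τ • 1 - A) * (1 - X) := by
    rw [mul_sub, mul_one, Matrix.mul_smul,
      mul_nonsing_inv _ ((isUnit_iff_isUnit_det _).1 hτ), sub_smul]
    abel
  rw [hfactor, mul_inv_rev]
  exact (hX.nonneg_inv_one_sub hXnorm).mul hR

theorem Nonneg.eventually_nonneg_inv_smul_one_sub {B : Matrix n n ℝ} (hB : B.Nonneg) :
    ∀ᶠ t : ℝ in atTop, (t • 1 - B)⁻¹.Nonneg := by
  filter_upwards [eventually_gt_atTop ‖B‖] with t ht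
  have ht0 : 0 < t := (norm_nonneg B).trans_lt ht
  set X := t⁻¹ • B
  have hXnorm : ‖X‖ < 1 := by
    rw [norm_smul, norm_inv, Real.norm_of_nonneg ht0.le, inv_mul_lt_one₀ ht0]
    exact ht
  have hfactor : t • 1 - B = t • (1 - X) := by
    rw [smul_sub, smul_smul, mul_inv_cancel₀ ht0.ne', one_smul]
  have := invertibleOfNonzero ht0.ne'
  rw [hfactor, inv_smul (A := 1 - X) t
    ((isUnit_iff_isUnit_det _).1 (Units.oneSub X hXnorm).isUnit), invOf_eq_inv]
  exact ((hB.smul (inv_nonneg.2 ht0.le)).nonneg_inv_one_sub hXnorm).smul (inv_nonneg.2 ht0.le)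

end Neumann

theorem continuousOn_inv_smul_one_sub {n : Type*} [Fintype n] [DecidableEq n]
    {A : Matrix n n ℝ} {s : Set ℝ} (hs : ∀ σ ∈ s, IsUnit (σ • 1 - A)) :
    ContinuousOn (fun σ : ℝ => (σ • 1 - A)⁻¹) s := by
  intro σ hσ
  obtain ⟨u, hu⟩ := (isUnit_iff_isUnit_det _).1 (hs σ hσ)
  have hinv : ContinuousAt Inv.inv (σ • 1 - A) :=
    continuousAt_matrix_inv _ (hu ▸ NormedRing.inverse_continuousAt u)
  exact (ContinuousAt.comp (f := fun σ : ℝ => σ • 1 - A) hinv (by fun_prop)).continuousWithinAt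

theorem exists_mulVec_eq_smul_of_mem_spectrum {n K : Type*} [Fintype n] [DecidableEq n] [Field K]
    {M : Matrix n n K} {μ : K} (h : μ ∈ spectrum K M) : ∃ v ≠ 0, M *ᵥ v = μ • v := by
  rw [← spectrum_toLin', ← Module.End.hasEigenvalue_iff_mem_spectrum] at h
  obtain ⟨v, hv⟩ := h.exists_hasEigenvector
  exact ⟨v, hv.2, by simpa using hv.apply_eq_smul⟩

theorem ofReal_mem_spectrum_map_ofReal {n : Type*} [Fintype n] [DecidableEq n]
    {A : Matrix n n ℝ} {σ : ℝ} :
    (σ : ℂ) ∈ spectrum ℂ (A.map Complex.ofReal) ↔ σ ∈ spectrum ℝ A := by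
  rw [mem_spectrum_iff_isRoot_charpoly, mem_spectrum_iff_isRoot_charpoly,
    ← Polynomial.isRoot_map_iff Complex.ofReal_injective (f := Complex.ofRealHom), ← charpoly_map]
  rfl

theorem Nonneg.norm_smul_le_mulVec_norm {n : Type*} [Fintype n] {B : Matrix n n ℝ}
    (hB : B.Nonneg) {x : n → ℂ} {μ : ℂ} (hx : B.map Complex.ofReal *ᵥ x = μ • x) :
    ‖μ‖ • (fun i => ‖x i‖) ≤ B *ᵥ fun i => ‖x i‖ := fun i => calc
  ‖μ‖ * ‖x i‖ = ‖(B.map Complex.ofReal *ᵥ x) i‖ := by rw [hx, Pi.smul_apply, smul_eq_mul, norm_mul]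
  _ ≤ ∑ j, ‖(B i j : ℂ) * x j‖ := norm_sum_le _ _
  _ = (B *ᵥ fun i => ‖x i‖) i := by
    simp only [norm_mul, Complex.norm_real, Real.norm_of_nonneg (hB _ _)]; rfl

theorem Nonneg.eq_zero_of_mulVec_nonpos {n : Type*} [Fintype n] [DecidableEq n]
    {M N : Matrix n n ℝ} (hN : N.Nonneg) (hNM : N * M = 1) {y : n → ℝ} (hy : 0 ≤ y)
    (hMy : M *ᵥ y ≤ 0) : y = 0 :=
  le_antisymm (by simpa [mulVec_mulVec, hNM] using hN.mulVec_nonpos hMy) hy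

variable {n : ℕ} {A : Matrix (Fin n) (Fin n) ℝ}

theorem Metzler.exists_nonneg_add_smul_one (hA : A.Metzler) : ∃ c : ℝ, (A + c • 1).Nonneg := by
  refine ⟨∑ i, |A i i|, fun i j => ?_⟩
  rcases eq_or_ne i j with rfl | hij
  · have := Finset.single_le_sum (fun k _ => abs_nonneg (A k k)) (Finset.mem_univ i)
    simp only [add_apply, smul_apply, one_apply_eq, smul_eq_mul, mul_one]
    linarith [neg_abs_le (A i i)]
  · simpa [one_apply_ne hij] using hA i j hij

theorem Metzler.eventually_nonneg_inv_smul_one_sub (hA : A.Metzler) :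
    ∀ᶠ σ : ℝ in atTop, (σ • 1 - A)⁻¹.Nonneg := by
  obtain ⟨c, hB⟩ := hA.exists_nonneg_add_smul_one
  filter_upwards [tendsto_atTop_add_const_right atTop c tendsto_id
    |>.eventually hB.eventually_nonneg_inv_smul_one_sub] with σ hσ
  rwa [show σ • 1 - A = (σ + c) • 1 - (A + c • 1) by rw [add_smul]; abel]

theorem Metzler.isUnit_det_and_nonneg_neg_inv (hA : A.Metzler)
    (hunit : ∀ σ : ℝ, 0 ≤ σ → IsUnit (σ • 1 - A)) : IsUnit A.det ∧ (-A⁻¹).Nonneg := by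
  have hdet : IsUnit A.det := (isUnit_iff_isUnit_det A).1 (by simpa using (hunit 0 le_rfl).neg)
  obtain ⟨σ₀, hR₀, hσ₀⟩ :=
    (hA.eventually_nonneg_inv_smul_one_sub.and (eventually_ge_atTop 0)).exists
  set S := {σ : ℝ | (σ • 1 - A)⁻¹.Nonneg}
  have hclosed : IsClosed (S ∩ Icc 0 σ₀) := by
    rw [inter_comm]
    exact (continuousOn_inv_smul_one_sub fun σ hσ => hunit σ hσ.1).preimage_isClosed_of_isClosed
      isClosed_Icc isClosed_setOf_nonneg
  have hS0 : (0 : ℝ) ∈ S := hclosed.mem_of_ge_of_forall_exists_lt hR₀ hσ₀ fun τ ⟨hτ, hτ0, _⟩ => by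
    obtain ⟨σ, hσ, hσ0, hστ⟩ := ((eventually_nhdsLT_nonneg_inv_smul_one_sub (hunit τ hτ0.le) hτ).and
      (Ioo_mem_nhdsLT hτ0)).exists
    exact ⟨σ, hσ, hσ0.le, hστ⟩
  have hneg : (-A)⁻¹ = -A⁻¹ := inv_eq_left_inv (by rw [neg_mul_neg, nonsing_inv_mul _ hdet])
  exact ⟨hdet, by simpa [S, hneg] using hS0⟩

theorem Hurwitz.isUnit_smul_one_sub (hA : A.Hurwitz) {σ : ℝ} (hσ : 0 ≤ σ) :
    IsUnit (σ • 1 - A) := by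
  have : σ ∉ spectrum ℝ A := fun h =>
    (hA _ (ofReal_mem_spectrum_map_ofReal.2 h)).not_ge (by simpa using hσ)
  rwa [spectrum.notMem_iff, Algebra.algebraMap_eq_smul_one] at this

theorem Metzler.re_lt_zero_of_nonneg_neg_inv (hA : A.Metzler) (hdet : IsUnit A.det)
    (hinv : (-A⁻¹).Nonneg) {μ : ℂ} (hμ : μ ∈ spectrum ℂ (A.map Complex.ofReal)) : μ.re < 0 := by
  obtain ⟨x, hx0, hx⟩ := exists_mulVec_eq_smul_of_mem_spectrum hμ
  obtain ⟨c, hB⟩ := hA.exists_nonneg_add_smul_one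
  set y : Fin n → ℝ := fun i => ‖x i‖
  have hBx : (A + c • 1).map Complex.ofReal *ᵥ x = (μ + c) • x := by
    have hc : (c • (1 : Matrix (Fin n) (Fin n) ℝ)).map Complex.ofReal = (c : ℂ) • 1 := by
      ext i j
      rcases eq_or_ne i j with rfl | hij <;> simp [one_apply_ne, *]
    rw [Matrix.map_add _ Complex.ofReal_add, add_mulVec, hx, hc, smul_mulVec, one_mulVec, add_smul]
  have hle := hB.norm_smul_le_mulVec_norm hBx
  suffices ‖μ + c‖ < c by
    linarith [Complex.re_le_norm (μ + c), Complex.add_re μ c, Complex.ofReal_re c]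
  by_contra! hc
  have hAy : (-A) *ᵥ y ≤ 0 := fun i => by
    have h1 := hle i
    have h2 : ((-A) *ᵥ y) i = c * y i - ((A + c • 1) *ᵥ y) i := by
      simp [add_mulVec, neg_mulVec, smul_mulVec]
    rw [h2, Pi.zero_apply, sub_nonpos]
    exact (mul_le_mul_of_nonneg_right hc (norm_nonneg _)).trans h1
  have hy0 := hinv.eq_zero_of_mulVec_nonpos (by simp [nonsing_inv_mul _ hdet])
    (fun i => norm_nonneg (x i)) hAy
  exact hx0 (funext fun i => norm_eq_zero.mp (congrFun hy0 i))

end Matrix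

/-- A Metzler matrix `A` is Hurwitz iff `A` is invertible and `-A⁻¹` has nonnegative
entries. -/
theorem metzler_hurwitz_iff_neg_inv_nonneg {n : ℕ} (A : Matrix (Fin n) (Fin n) ℝ)
    (hA : A.Metzler) :
    A.Hurwitz ↔ IsUnit A.det ∧ ∀ i j, 0 ≤ (-A⁻¹) i j :=
  ⟨fun hH => hA.isUnit_det_and_nonneg_neg_inv fun _ => hH.isUnit_smul_one_sub,
    fun ⟨hdet, hinv⟩ _ => hA.re_lt_zero_of_nonneg_neg_inv hdet hinv⟩
end

section
/- Let A ∈ ℝ^{n×n} be a Metzler matrix, and suppose ξ = (ξ₁,…,ξ_n) ∈ ℝ^n and z = (z₁,…,z_n) ∈ ℝ^n satisfy ξ > 0, Aξ < 0, z > 0 and Aᵀz < 0 (all inequalities entrywise). Then the diagonal matrix P = diag(z₁/ξ₁, …, z_n/ξ_n) has positive diagonal entries and satisfies AᵀP + PA ≺ 0 (negative definite). -/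
open Matrix

/-!
With `P = diag(z / ξ)` we have `Pξ = z`, so `Q = -(AᵀP + PA)` satisfies `Qξ = -Aᵀz - P(Aξ) > 0`,
and `Q` is symmetric with nonpositive off-diagonal entries because `A` is Metzler. Such a matrix
is positive definite: after the congruence by `diag ξ` its row sums are positive, and for a
symmetric `M` one has `2 yᵀMy = 2 ∑ᵢ (M𝟙)ᵢ yᵢ² - ∑ᵢⱼ Mᵢⱼ (yᵢ - yⱼ)²`, where `Mᵢⱼ ≤ 0` for `i ≠ j`.
-/

open Finset

namespace Matrix

variable {ι R : Type*} [Fintype ι]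

theorem two_mul_dotProduct_mulVec_self [CommRing R] (M : Matrix ι ι R) (y : ι → R) :
    2 * (y ⬝ᵥ (M *ᵥ y)) =
      ∑ i, ((M *ᵥ 1) i + (1 ᵥ* M) i) * y i ^ 2 - ∑ i, ∑ j, M i j * (y i - y j) ^ 2 := by
  have hcol : ∑ i, (1 ᵥ* M) i * y i ^ 2 = ∑ i, ∑ j, M i j * y j ^ 2 := by
    simp only [vecMul, dotProduct, Pi.one_apply, one_mul, sum_mul]
    exact sum_comm
  simp only [add_mul, sum_add_distrib, hcol]
  simp only [dotProduct, mulVec, Pi.one_apply, mul_one, sum_mul, mul_sum, ← sum_add_distrib,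
    ← sum_sub_distrib]
  exact sum_congr rfl fun i _ => sum_congr rfl fun j _ => by ring

section OrderedRing

variable [CommRing R] [LinearOrder R] [IsStrictOrderedRing R] [StarRing R] [TrivialStar R]

theorem PosDef.of_offDiag_nonpos_of_mulVec_one_pos {M : Matrix ι ι R} (hM : M.IsHermitian)
    (hoff : ∀ i j, i ≠ j → M i j ≤ 0) (hrow : ∀ i, 0 < (M *ᵥ 1) i) : M.PosDef := by
  refine PosDef.of_dotProduct_mulVec_pos hM fun y hy => ?_
  have hcol : 1 ᵥ* M = M *ᵥ 1 := by
    rw [← vecMul_transpose, ← conjTranspose_eq_transpose_of_trivial, hM.eq]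
  obtain ⟨k, hk⟩ := Function.ne_iff.1 hy
  have hdiag : 0 < ∑ i, ((M *ᵥ 1) i + (1 ᵥ* M) i) * y i ^ 2 := by
    rw [hcol]
    refine sum_pos' (fun i _ => by nlinarith [hrow i, sq_nonneg (y i)]) ⟨k, mem_univ k, ?_⟩
    exact mul_pos (by linarith [hrow k]) (pow_two_pos_of_ne_zero hk)
  have hoffsum : ∑ i, ∑ j, M i j * (y i - y j) ^ 2 ≤ 0 := by
    refine sum_nonpos fun i _ => sum_nonpos fun j _ => ?_
    obtain rfl | hij := eq_or_ne i j
    · simp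
    · exact mul_nonpos_of_nonpos_of_nonneg (hoff i j hij) (sq_nonneg _)
  have := two_mul_dotProduct_mulVec_self M y
  rw [star_trivial]
  linarith

end OrderedRing

variable [Field R] [LinearOrder R] [IsStrictOrderedRing R] [StarRing R] [TrivialStar R]
  [DecidableEq ι]

theorem PosDef.of_offDiag_nonpos_of_mulVec_pos {M : Matrix ι ι R} (hM : M.IsHermitian)
    (hoff : ∀ i j, i ≠ j → M i j ≤ 0) {ξ : ι → R} (hξ : ∀ i, 0 < ξ i)
    (hMξ : ∀ i, 0 < (M *ᵥ ξ) i) : M.PosDef := by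
  set D := diagonal ξ
  have hD : IsUnit D := isUnit_diagonal.2 <| Pi.isUnit_iff.2 fun i => (hξ i).ne'.isUnit
  have hDstar : star D = D := by rw [star_eq_conjTranspose, diagonal_conjTranspose, star_trivial]
  have hD1 : D *ᵥ 1 = ξ := by ext i; simp [D, mulVec_diagonal]
  rw [← hD.posDef_star_left_conjugate_iff, hDstar]
  refine of_offDiag_nonpos_of_mulVec_one_pos ?_ (fun i j hij => ?_) fun i => ?_
  · have := isHermitian_conjTranspose_mul_mul D hM
    rwa [← star_eq_conjTranspose, hDstar] at this
  · simpa [D, diagonal_mul, mul_diagonal] using mul_nonpos_of_nonpos_of_nonneg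
      (mul_nonpos_of_nonneg_of_nonpos (hξ i).le (hoff i j hij)) (hξ j).le
  · simpa [← mulVec_mulVec, hD1, D, mulVec_diagonal] using mul_pos (hξ i) (hMξ i)

theorem Metzler.transpose_mul_diagonal_add_diagonal_mul {n : ℕ} {A : Matrix (Fin n) (Fin n) ℝ}
    (hA : A.Metzler) {p : Fin n → ℝ} (hp : ∀ i, 0 ≤ p i) :
    (Aᵀ * diagonal p + diagonal p * A).Metzler := fun i j hij => by
  simp only [add_apply, mul_diagonal, diagonal_mul, transpose_apply]
  exact add_nonneg (mul_nonneg (hA j i hij.symm) (hp j)) (mul_nonneg (hp i) (hA i j hij))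

end Matrix

/-- If a Metzler matrix `A` admits `ξ > 0` with `Aξ < 0` and `z > 0` with `Aᵀz < 0`
(entrywise), then `P = diag(z₁/ξ₁, …, zₙ/ξₙ)` has positive diagonal entries and
satisfies `AᵀP + PA ≺ 0`. -/
theorem metzler_diag_lyapunov_of_pos_vecs {n : ℕ} (A : Matrix (Fin n) (Fin n) ℝ)
    (hA : A.Metzler) (ξ z : Fin n → ℝ)
    (hξ : ∀ i, 0 < ξ i) (hAξ : ∀ i, (A *ᵥ ξ) i < 0)
    (hz : ∀ i, 0 < z i) (hAz : ∀ i, (Aᵀ *ᵥ z) i < 0) :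
    (∀ i, 0 < z i / ξ i) ∧
    (-(Aᵀ * Matrix.diagonal (fun i => z i / ξ i) +
        Matrix.diagonal (fun i => z i / ξ i) * A)).PosDef := by
  set p : Fin n → ℝ := fun i => z i / ξ i
  have hp : ∀ i, 0 < p i := fun i => div_pos (hz i) (hξ i)
  have hpξ : diagonal p *ᵥ ξ = z := by
    ext i; simp [p, mulVec_diagonal, div_mul_cancel₀ _ (hξ i).ne']
  set S := Aᵀ * diagonal p + diagonal p * A
  have hS : S.IsHermitian := by
    simp [S, IsHermitian, conjTranspose_eq_transpose_of_trivial, add_comm]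
  have hSξ : S *ᵥ ξ = Aᵀ *ᵥ z + diagonal p *ᵥ (A *ᵥ ξ) := by
    simp [S, add_mulVec, ← mulVec_mulVec, hpξ]
  have hS_metzler := hA.transpose_mul_diagonal_add_diagonal_mul fun i => (hp i).le
  refine ⟨hp, PosDef.of_offDiag_nonpos_of_mulVec_pos hS.neg
    (fun i j hij => neg_nonpos.2 (hS_metzler i j hij)) hξ fun i => ?_⟩
  have := mul_pos (hp i) (neg_pos.2 (hAξ i))
  simp only [neg_mulVec, Pi.neg_apply, hSξ, Pi.add_apply, mulVec_diagonal]
  linarith [hAz i]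
end

section
/- Let B ∈ ℝ^{n×n} have all entries nonnegative, and suppose ξ = (ξ₁,…,ξ_n) and z = (z₁,…,z_n) satisfy ξ > 0, Bξ < ξ, z > 0 and Bᵀz < z (entrywise). Then the diagonal matrix P = diag(z₁/ξ₁, …, z_n/ξ_n) has positive diagonal entries and satisfies BᵀPB ≺ P, i.e., BᵀPB − P is negative definite. -/
open Matrix

/-!
Write `p i = z i / ξ i` and `w j = x j ^ 2 / ξ j`. Cauchy–Schwarz with the weights `B i j * ξ j`
and `B i j / ξ j` gives `(B x)ᵢ² ≤ (B ξ)ᵢ (B w)ᵢ ≤ ξᵢ (B w)ᵢ`, hence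
`∑ pᵢ (B x)ᵢ² ≤ ∑ zᵢ (B w)ᵢ = ⟪Bᵀ z, w⟫ < ⟪z, w⟫ = ∑ pᵢ xᵢ²` for `x ≠ 0`,
which is the quadratic form of `P - Bᵀ P B` being positive.
-/

namespace Matrix

variable {ι : Type*} [Fintype ι]

theorem sq_mulVec_le_mulVec_mul_mulVec {B : Matrix ι ι ℝ} (hB : ∀ i j, 0 ≤ B i j)
    {ξ : ι → ℝ} (hξ : ∀ i, 0 < ξ i) (x : ι → ℝ) (i : ι) :
    (B *ᵥ x) i ^ 2 ≤ (B *ᵥ ξ) i * (B *ᵥ fun j => x j ^ 2 / ξ j) i := by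
  simp only [mulVec, dotProduct]
  refine Finset.sum_sq_le_sum_mul_sum_of_sq_le_mul _
    (fun j _ => mul_nonneg (hB i j) (hξ j).le)
    (fun j _ => mul_nonneg (hB i j) (div_nonneg (sq_nonneg _) (hξ j).le)) fun j _ => ?_
  rw [mul_mul_mul_comm, mul_div_cancel₀ _ (hξ j).ne']
  exact le_of_eq (by ring)

theorem dotProduct_lt_dotProduct_of_lt {u v w : ι → ℝ} (huv : ∀ i, u i < v i)
    (hw : ∀ i, 0 ≤ w i) (hw_ne : w ≠ 0) : u ⬝ᵥ w < v ⬝ᵥ w := by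
  obtain ⟨j, hj⟩ := Function.ne_iff.mp hw_ne
  exact Finset.sum_lt_sum (fun i _ => mul_le_mul_of_nonneg_right (huv i).le (hw i))
    ⟨j, Finset.mem_univ j, mul_lt_mul_of_pos_right (huv j) ((hw j).lt_of_ne' hj)⟩

theorem sum_div_mul_sq_mulVec_lt {B : Matrix ι ι ℝ} (hB : ∀ i j, 0 ≤ B i j) {ξ z : ι → ℝ}
    (hξ : ∀ i, 0 < ξ i) (hz : ∀ i, 0 ≤ z i) (hBξ : ∀ i, (B *ᵥ ξ) i ≤ ξ i)
    (hBz : ∀ i, (Bᵀ *ᵥ z) i < z i) {x : ι → ℝ} (hx : x ≠ 0) :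
    ∑ i, z i / ξ i * (B *ᵥ x) i ^ 2 < ∑ i, z i / ξ i * x i ^ 2 := by
  set w : ι → ℝ := fun j => x j ^ 2 / ξ j
  have hw : ∀ j, 0 ≤ w j := fun j => div_nonneg (sq_nonneg _) (hξ j).le
  have hw_ne : w ≠ 0 := fun h => hx <| funext fun j => by
    simpa [w, (hξ j).ne'] using congrFun h j
  calc ∑ i, z i / ξ i * (B *ᵥ x) i ^ 2
      ≤ ∑ i, z i / ξ i * (ξ i * (B *ᵥ w) i) := by
        gcongr with i
        · exact div_nonneg (hz i) (hξ i).le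
        · have hBw : 0 ≤ (B *ᵥ w) i := Finset.sum_nonneg fun j _ => mul_nonneg (hB i j) (hw j)
          exact (sq_mulVec_le_mulVec_mul_mulVec hB hξ x i).trans <|
            mul_le_mul_of_nonneg_right (hBξ i) hBw
    _ = z ⬝ᵥ B *ᵥ w := Finset.sum_congr rfl fun i _ => by field_simp [(hξ i).ne']
    _ = (Bᵀ *ᵥ z) ⬝ᵥ w := by rw [dotProduct_mulVec, mulVec_transpose]
    _ < z ⬝ᵥ w := dotProduct_lt_dotProduct_of_lt hBz hw hw_ne
    _ = ∑ i, z i / ξ i * x i ^ 2 := Finset.sum_congr rfl fun i _ => by ring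

theorem dotProduct_transpose_mul_mul_mulVec (A B : Matrix ι ι ℝ) (x : ι → ℝ) :
    x ⬝ᵥ (Bᵀ * A * B) *ᵥ x = (B *ᵥ x) ⬝ᵥ A *ᵥ (B *ᵥ x) := by
  rw [← mulVec_mulVec, ← mulVec_mulVec, dotProduct_mulVec, vecMul_transpose]

theorem posDef_diagonal_sub_transpose_mul_diagonal_mul [DecidableEq ι] {p : ι → ℝ}
    {B : Matrix ι ι ℝ}
    (h : ∀ x, x ≠ 0 → ∑ i, p i * (B *ᵥ x) i ^ 2 < ∑ i, p i * x i ^ 2) :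
    (diagonal p - Bᵀ * diagonal p * B).PosDef := by
  refine posDef_iff_dotProduct_mulVec.mpr ⟨?_, fun x hx => ?_⟩
  · refine (isHermitian_diagonal p).sub ?_
    simpa using isHermitian_conjTranspose_mul_mul B (isHermitian_diagonal p)
  · have hquad (y : ι → ℝ) : y ⬝ᵥ diagonal p *ᵥ y = ∑ i, p i * y i ^ 2 := by
      simp only [dotProduct, mulVec_diagonal]
      exact Finset.sum_congr rfl fun i _ => by ring
    rw [star_trivial, sub_mulVec, dotProduct_sub, dotProduct_transpose_mul_mul_mulVec, hquad,
      hquad]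
    exact sub_pos.mpr (h x hx)

end Matrix

/-- If a nonnegative matrix `B` admits `ξ > 0` with `Bξ < ξ` and `z > 0` with `Bᵀz < z`
(entrywise), then `P = diag(z₁/ξ₁, …, zₙ/ξₙ)` has positive diagonal entries and
satisfies `BᵀPB ≺ P`. -/
theorem nonneg_diag_stein_of_pos_vecs {n : ℕ} (B : Matrix (Fin n) (Fin n) ℝ)
    (hB : ∀ i j, 0 ≤ B i j) (ξ z : Fin n → ℝ)
    (hξ : ∀ i, 0 < ξ i) (hBξ : ∀ i, (B *ᵥ ξ) i < ξ i)
    (hz : ∀ i, 0 < z i) (hBz : ∀ i, (Bᵀ *ᵥ z) i < z i) :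
    (∀ i, 0 < z i / ξ i) ∧
    (Matrix.diagonal (fun i => z i / ξ i) -
      Bᵀ * Matrix.diagonal (fun i => z i / ξ i) * B).PosDef :=
  ⟨fun i => div_pos (hz i) (hξ i),
    posDef_diagonal_sub_transpose_mul_diagonal_mul fun _ hx =>
      sum_div_mul_sq_mulVec_lt hB hξ (fun i => (hz i).le) (fun i => (hBξ i).le) hBz hx⟩
end

section
/- Let A ∈ ℝ^{n×n} be Hurwitz, and let B ∈ ℝ^{n×m}, C ∈ ℝ^{r×n}, D ∈ ℝ^{r×m} be such that every entry of C e^{At} B is nonnegative for all t ≥ 0 and every entry of D is nonnegative. For ω ∈ ℝ define the transfer matrix G(iω) = C (iωI − A)⁻¹ B + D, which equals ∫₀^∞ e^{−iωt} C e^{At} B dt + D. Then for every ω ∈ ℝ and all indices j, k, one has |G(iω)_{jk}| ≤ G(0)_{jk}, where G(0) = D − C A⁻¹ B has nonnegative entries. Consequently |G(iω) w| ≤ G(0) |w| entrywise for every w ∈ ℂ^m, where |·| denotes the entrywise absolute value (modulus). -/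
open Matrix

/-!
The impulse response `h(t) = C e^{tA} B` is integrable on `(0, ∞)` because `e^{tA}` decays
exponentially: on a generalized eigenspace of `A` for the eigenvalue `μ`, `e^{tA}` acts as
`e^{tμ}` times a polynomial in `t`, and `Re μ < 0`. Integrating the derivative of
`e^{t(A - iω)}` gives the Laplace-transform formula `C (iω - A)⁻¹ B = ∫₀^∞ e^{-iωt} h(t) dt`.
As `h ≥ 0`, the modulus of this integral is at most `∫₀^∞ h = -C A⁻¹ B`, its value at `ω = 0`;
adding `D ≥ 0` gives `|G(iω)| ≤ G(0)` entrywise, and the bound on `G(iω) w` is the triangle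
inequality.
-/

open NormedSpace MeasureTheory Filter Asymptotics Set Topology Finset
-- Any norm on matrices would do; the instances of the L2 operator norm unify with the product
-- topology over which `NormedSpace.exp` is stated, as integrals of `exp (t • M)` require.
open scoped Matrix.Norms.L2Operator Nat

theorem Complex.isBigO_exp_mul_pow_atTop (μ : ℂ) (j : ℕ) {b : ℝ} (hb : μ.re < b) :
    (fun t : ℝ => Complex.exp (t * μ) * (t : ℂ) ^ j) =O[atTop] fun t => Real.exp (b * t) := by
  have hexp : (fun t : ℝ => Complex.exp (t * μ)) =O[atTop] fun t => Real.exp (μ.re * t) :=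
    isBigO_of_le _ fun t => by simp [Complex.norm_exp, mul_comm]
  have hpow : (fun t : ℝ => (t : ℂ) ^ j) =O[atTop] fun t => Real.exp ((b - μ.re) * t) :=
    isBigO_norm_left.1 <| by
      simpa using (isLittleO_pow_exp_pos_mul_atTop j (sub_pos.2 hb)).isBigO.norm_left
  refine (hexp.mul hpow).congr_right fun t => ?_
  rw [← Real.exp_add]
  ring_nf

namespace Matrix
variable {ι : Type*} [Fintype ι] [DecidableEq ι]

theorem exp_add_smul_one (X : Matrix ι ι ℂ) (z : ℂ) :
    exp (X + z • (1 : Matrix ι ι ℂ)) = Complex.exp z • exp X := by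
  rw [Matrix.exp_add_of_commute _ _ ((Commute.one_right X).smul_right z), smul_one_eq_diagonal,
    exp_diagonal]
  ext i j
  simp [Pi.exp_def, mul_diagonal, mul_comm, Complex.exp_eq_exp_ℂ]

theorem exp_mulVec_eq_sum_of_pow_mulVec_eq_zero {N : Matrix ι ι ℂ} {v : ι → ℂ} {k : ℕ}
    (hv : N ^ k *ᵥ v = 0) :
    exp N *ᵥ v = ∑ j ∈ range k, (j !⁻¹ : ℂ) • (N ^ j *ᵥ v) := by
  have hseries : HasSum (fun j => (j !⁻¹ : ℂ) • (N ^ j *ᵥ v)) (exp N *ᵥ v) := by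
    convert (exp_series_hasSum_exp' (𝕂 := ℂ) N).map
      (mulVec.addMonoidHomLeft v) (continuous_id.matrix_mulVec continuous_const) using 1
    · exact funext fun j => (smul_mulVec _ _ _).symm
    · rfl
  refine hseries.unique (hasSum_sum_of_ne_finset_zero fun j hj => ?_)
  obtain ⟨d, rfl⟩ := Nat.exists_eq_add_of_le (not_lt.1 (Finset.mem_range.not.1 hj))
  simp [add_comm k, pow_add, ← mulVec_mulVec, hv]

theorem exp_smul_mulVec_of_pow_mulVec_eq_zero {M : Matrix ι ι ℂ} {μ : ℂ} {v : ι → ℂ} {k : ℕ}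
    (hv : (M - μ • 1) ^ k *ᵥ v = 0) (t : ℝ) :
    exp (t • M) *ᵥ v = ∑ j ∈ range k,
      (Complex.exp (t * μ) * (t : ℂ) ^ j) • (j !⁻¹ : ℂ) • ((M - μ • 1) ^ j *ᵥ v) := by
  have hsplit : t • M = (t : ℂ) • (M - μ • 1) + ((t : ℂ) * μ) • 1 := by
    rw [smul_sub, smul_smul, sub_add_cancel, Complex.coe_smul]
  rw [hsplit, exp_add_smul_one, smul_mulVec, exp_mulVec_eq_sum_of_pow_mulVec_eq_zero
    (by rw [smul_pow, smul_mulVec, hv, smul_zero]), Finset.smul_sum]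
  refine Finset.sum_congr rfl fun j _ => ?_
  rw [smul_pow, smul_mulVec, smul_comm _ ((t : ℂ) ^ j), smul_smul, smul_smul]

theorem isBigO_exp_smul_mulVec_of_mem_maxGenEigenspace {M : Matrix ι ι ℂ} {μ : ℂ} {v : ι → ℂ}
    (hv : v ∈ Module.End.maxGenEigenspace (toLin' M) μ) {b : ℝ} (hb : μ.re < b) :
    (fun t : ℝ => exp (t • M) *ᵥ v) =O[atTop] fun t => Real.exp (b * t) := by
  obtain ⟨k, hk⟩ := (Module.End.mem_maxGenEigenspace _ _ _).1 hv
  have hk' : (M - μ • 1) ^ k *ᵥ v = 0 := by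
    have hlin : toLin' M - μ • 1 = toLin' (M - μ • 1) := by rw [map_sub, map_smul, toLin'_one]; rfl
    rwa [hlin, ← toLin'_pow, toLin'_apply] at hk
  simp_rw [exp_smul_mulVec_of_pow_mulVec_eq_zero hk']
  refine IsBigO.fun_sum fun j _ => isBigO_pi.2 fun i => ?_
  simpa [mul_comm] using (Complex.isBigO_exp_mul_pow_atTop μ j hb).const_mul_left
    (((j !⁻¹ : ℂ) • ((M - μ • 1) ^ j *ᵥ v)) i)

theorem isBigO_exp_smul_mulVec {M : Matrix ι ι ℂ} {b : ℝ} (hM : ∀ μ ∈ spectrum ℂ M, μ.re < b)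
    (v : ι → ℂ) : (fun t : ℝ => exp (t • M) *ᵥ v) =O[atTop] fun t => Real.exp (b * t) := by
  have hv : v ∈ ⨆ μ, Module.End.maxGenEigenspace (toLin' M) μ := by
    rw [Module.End.iSup_maxGenEigenspace_eq_top]; trivial
  refine Submodule.iSup_induction (motive := fun w =>
      (fun t : ℝ => exp (t • M) *ᵥ w) =O[atTop] fun t => Real.exp (b * t)) _ hv
    (fun μ w hw => ?_) ((isBigO_zero _ _).congr_left fun t => (mulVec_zero _).symm)
    fun w w' hw hw' => (hw.add hw').congr_left fun t => (mulVec_add _ _ _).symm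
  rcases eq_or_ne w 0 with rfl | hw0
  · exact (isBigO_zero _ _).congr_left fun t => (mulVec_zero _).symm
  have hμ : Module.End.HasEigenvalue (toLin' M) μ :=
    Module.End.HasUnifEigenvalue.lt (k := ⊤) zero_lt_one fun h => hw0 (by
      rwa [Module.End.maxGenEigenspace, h, Submodule.mem_bot] at hw)
  rw [Module.End.hasEigenvalue_iff_mem_spectrum, spectrum_toLin'] at hμ
  exact isBigO_exp_smul_mulVec_of_mem_maxGenEigenspace hw (hM μ hμ)

theorem isBigO_of_forall_isBigO_apply {α : Type*} {l : Filter α} {f : α → Matrix ι ι ℂ}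
    {g : α → ℝ} (h : ∀ i j, (fun x => f x i j) =O[l] g) : f =O[l] g :=
  ((LinearMap.toContinuousLinearMap (ofLinearEquiv ℂ).toLinearMap).isBigO_comp
    (fun x i j => f x i j) l).trans (isBigO_pi.2 fun i => isBigO_pi.2 (h i))

theorem isBigO_exp_smul {M : Matrix ι ι ℂ} {b : ℝ} (hM : ∀ μ ∈ spectrum ℂ M, μ.re < b) :
    (fun t : ℝ => exp (t • M)) =O[atTop] fun t => Real.exp (b * t) :=
  isBigO_of_forall_isBigO_apply fun i j => by
    simpa [mulVec_single] using isBigO_pi.1 (isBigO_exp_smul_mulVec hM (Pi.single j 1)) i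

theorem exists_neg_forall_re_lt (M : Matrix ι ι ℂ) (hM : ∀ μ ∈ spectrum ℂ M, μ.re < 0) :
    ∃ b < 0, ∀ μ ∈ spectrum ℂ M, μ.re < b := by
  rcases (spectrum ℂ M).eq_empty_or_nonempty with h | h
  · exact ⟨-1, by norm_num, by simp [h]⟩
  obtain ⟨μ₀, hμ₀, hmax⟩ := Set.exists_max_image _ Complex.re M.finite_spectrum h
  have := hM μ₀ hμ₀
  exact ⟨μ₀.re / 2, by linarith, fun μ hμ => by linarith [hmax μ hμ]⟩

theorem integrableOn_exp_smul_Ioi {M : Matrix ι ι ℂ} (hM : ∀ μ ∈ spectrum ℂ M, μ.re < 0) :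
    IntegrableOn (fun t : ℝ => exp (t • M)) (Ioi (0 : ℝ)) := by
  obtain ⟨b, hb0, hb⟩ := exists_neg_forall_re_lt M hM
  have hcont : Continuous fun t : ℝ => exp (t • M) := (differentiable_exp_smul_const ℝ M).continuous
  refine ((hcont.continuousOn.locallyIntegrableOn measurableSet_Ici).integrableOn_of_isBigO_atTop
    (isBigO_exp_smul hb) ⟨Ioi 0, Ioi_mem_atTop 0, ?_⟩).mono_set Ioi_subset_Ici_self
  simpa using exp_neg_integrableOn_Ioi 0 (neg_pos.2 hb0)

theorem tendsto_exp_smul_atTop {M : Matrix ι ι ℂ} (hM : ∀ μ ∈ spectrum ℂ M, μ.re < 0) :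
    Tendsto (fun t : ℝ => exp (t • M)) atTop (𝓝 0) := by
  obtain ⟨b, hb0, hb⟩ := exists_neg_forall_re_lt M hM
  exact (isBigO_exp_smul hb).trans_tendsto
    (Real.tendsto_exp_atBot.comp (tendsto_id.const_mul_atTop_of_neg hb0))

theorem integral_exp_smul_Ioi {M : Matrix ι ι ℂ} (hM : ∀ μ ∈ spectrum ℂ M, μ.re < 0) :
    ∫ t in Ioi (0 : ℝ), exp (t • M) = (-M)⁻¹ := by
  have hint := integrableOn_exp_smul_Ioi hM
  have hFTC : ∫ t in Ioi (0 : ℝ), exp (t • M) * M = 0 - exp ((0 : ℝ) • M) :=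
    integral_Ioi_of_hasDerivAt_of_tendsto
      (differentiable_exp_smul_const ℝ M).continuous.continuousWithinAt
      (fun t _ => hasDerivAt_exp_smul_const M t) (hint.mul_const M) (tendsto_exp_smul_atTop hM)
  have hmul : (∫ t in Ioi (0 : ℝ), exp (t • M)) * M = ∫ t in Ioi (0 : ℝ), exp (t • M) * M :=
    (((ContinuousLinearMap.mul ℝ (Matrix ι ι ℂ)).flip M).integral_comp_comm hint).symm
  refine (inv_eq_left_inv ?_).symm
  rw [mul_neg, hmul, hFTC]
  simp

theorem exp_map_ofReal (A : Matrix ι ι ℝ) :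
    (exp A).map Complex.ofReal = exp (A.map Complex.ofReal) := by
  refine ((exp_series_hasSum_exp' (𝕂 := ℝ) A).map Complex.ofRealHom.mapMatrix
    (continuous_id.matrix_map Complex.continuous_ofReal)).unique ?_
  -- `convert` also asks that the product topology on matrices equal the norm topology: `rfl`.
  convert exp_series_hasSum_exp' (𝕂 := ℝ) (A.map Complex.ofReal) using 1 <;> try rfl
  funext j
  simp [Matrix.map_pow, Matrix.map_smul]
  rfl

theorem isUnit_det_of_forall_re_lt_zero {A : Matrix ι ι ℝ}
    (hA : ∀ μ ∈ spectrum ℂ (A.map Complex.ofReal), μ.re < 0) : IsUnit A.det := by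
  have h : IsUnit (A.map Complex.ofReal) :=
    (spectrum.zero_notMem_iff ℂ).1 fun h0 => (hA 0 h0).false
  have hdet : (A.map Complex.ofReal).det = (A.det : ℂ) := (Complex.ofRealHom.map_det A).symm
  rw [isUnit_iff_isUnit_det, hdet, isUnit_iff_ne_zero, Complex.ofReal_ne_zero] at h
  exact isUnit_iff_ne_zero.2 h

theorem map_ofReal_mul {l m n : Type*} [Fintype m] (P : Matrix l m ℝ) (Q : Matrix m n ℝ) :
    (P * Q).map Complex.ofReal = P.map Complex.ofReal * Q.map Complex.ofReal :=
  Matrix.map_mul (f := Complex.ofRealHom)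

noncomputable def sandwichEntryCLM {l m n o : Type*} [Fintype m] [Fintype n] (C : Matrix l m ℂ)
    (B : Matrix n o ℂ) (j : l) (k : o) : Matrix m n ℂ →L[ℂ] ℂ :=
  LinearMap.toContinuousLinearMap
    (entryLinearMap ℂ ℂ j k ∘ₗ mulRightLinearMap l ℂ B ∘ₗ mulLeftLinearMap n ℂ C)

@[simp]
theorem sandwichEntryCLM_apply {l m n o : Type*} [Fintype m] [Fintype n] (C : Matrix l m ℂ)
    (B : Matrix n o ℂ) (j : l) (k : o) (X : Matrix m n ℂ) :
    sandwichEntryCLM C B j k X = (C * X * B) j k :=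
  rfl

theorem sandwichEntryCLM_smul_map_ofReal {l m n o : Type*} [Fintype m] [Fintype n]
    (C : Matrix l m ℝ) (B : Matrix n o ℝ) (j : l) (k : o) (z : ℂ) (X : Matrix m n ℝ) :
    sandwichEntryCLM (C.map Complex.ofReal) (B.map Complex.ofReal) j k (z • X.map Complex.ofReal) =
      z * (C * X * B) j k := by
  rw [sandwichEntryCLM_apply, Matrix.mul_smul, Matrix.smul_mul, smul_apply, smul_eq_mul,
    ← map_ofReal_mul, ← map_ofReal_mul]
  rfl

end Matrix

namespace Matrix.Hurwitz
variable {n m r : ℕ} {A : Matrix (Fin n) (Fin n) ℝ}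

theorem re_lt_zero_of_mem_spectrum_sub (hA : A.Hurwitz) (ω : ℝ) :
    ∀ μ ∈ spectrum ℂ (A.map Complex.ofReal - ((ω : ℂ) * Complex.I) • 1), μ.re < 0 := by
  intro μ hμ
  rw [← Algebra.algebraMap_eq_smul_one, ← spectrum.sub_singleton_eq] at hμ
  obtain ⟨ν, hν, _, rfl, rfl⟩ := hμ
  simpa using hA ν hν

theorem integral_exp_eq_resolvent (hA : A.Hurwitz) (ω : ℝ) :
    IntegrableOn (fun t : ℝ => Complex.exp (-(t * (ω * Complex.I))) •
      (exp (t • A)).map Complex.ofReal) (Ioi 0) ∧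
    ∫ t in Ioi (0 : ℝ), Complex.exp (-(t * (ω * Complex.I))) • (exp (t • A)).map Complex.ofReal =
      (((ω : ℂ) * Complex.I) • (1 : Matrix (Fin n) (Fin n) ℂ) - A.map Complex.ofReal)⁻¹ := by
  set M := A.map Complex.ofReal - ((ω : ℂ) * Complex.I) • (1 : Matrix (Fin n) (Fin n) ℂ)
  have hexp : ∀ t : ℝ, exp (t • M) =
      Complex.exp (-(t * (ω * Complex.I))) • (exp (t • A)).map Complex.ofReal := by
    intro t
    have hsplit : t • M = (t • A).map Complex.ofReal + (-(t * (ω * Complex.I))) • 1 := by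
      ext a b
      by_cases hab : a = b <;> simp [M, hab, sub_eq_add_neg]
    rw [hsplit, exp_add_smul_one, exp_map_ofReal]
  simp_rw [← hexp]
  refine ⟨integrableOn_exp_smul_Ioi (re_lt_zero_of_mem_spectrum_sub hA ω), ?_⟩
  rw [integral_exp_smul_Ioi (re_lt_zero_of_mem_spectrum_sub hA ω), neg_sub]

theorem transfer_apply_eq_integral (hA : A.Hurwitz) (B : Matrix (Fin n) (Fin m) ℝ)
    (C : Matrix (Fin r) (Fin n) ℝ) (ω : ℝ) (j : Fin r) (k : Fin m) :
    (C.map Complex.ofReal * (((ω : ℂ) * Complex.I) • (1 : Matrix (Fin n) (Fin n) ℂ) -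
      A.map Complex.ofReal)⁻¹ * B.map Complex.ofReal) j k =
    ∫ t in Ioi (0 : ℝ), Complex.exp (-(t * (ω * Complex.I))) * (C * exp (t • A) * B) j k := by
  obtain ⟨hint, hres⟩ := integral_exp_eq_resolvent hA ω
  rw [← hres, ← sandwichEntryCLM_apply,
    ← (sandwichEntryCLM _ _ j k).integral_comp_comm hint]
  simp_rw [sandwichEntryCLM_smul_map_ofReal]

theorem integral_impulse_apply (hA : A.Hurwitz) (B : Matrix (Fin n) (Fin m) ℝ)
    (C : Matrix (Fin r) (Fin n) ℝ) (j : Fin r) (k : Fin m) :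
    ∫ t in Ioi (0 : ℝ), (C * exp (t • A) * B) j k = -(C * A⁻¹ * B) j k := by
  have h := transfer_apply_eq_integral hA B C 0 j k
  have hinv : (-A.map Complex.ofReal)⁻¹ = (-A⁻¹).map Complex.ofReal := by
    refine inv_eq_left_inv ?_
    rw [← Matrix.map_neg _ Complex.ofReal_neg, ← map_ofReal_mul]
    simp [nonsing_inv_mul _ (isUnit_det_of_forall_re_lt_zero hA)]
  simp only [Complex.ofReal_zero, zero_mul, zero_smul, zero_sub, mul_zero, neg_zero,
    Complex.exp_zero, one_mul, integral_complex_ofReal, hinv] at h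
  rw [← map_ofReal_mul, ← map_ofReal_mul, map_apply, Complex.ofReal_inj] at h
  rw [← h, Matrix.mul_neg, Matrix.neg_mul, neg_apply]

theorem norm_transfer_apply_le (hA : A.Hurwitz) {B : Matrix (Fin n) (Fin m) ℝ}
    {C : Matrix (Fin r) (Fin n) ℝ} (hCeB : ∀ t : ℝ, 0 ≤ t → ∀ i j, 0 ≤ (C * exp (t • A) * B) i j)
    (ω : ℝ) (j : Fin r) (k : Fin m) :
    ‖(C.map Complex.ofReal * (((ω : ℂ) * Complex.I) • (1 : Matrix (Fin n) (Fin n) ℂ) -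
      A.map Complex.ofReal)⁻¹ * B.map Complex.ofReal) j k‖ ≤ -(C * A⁻¹ * B) j k := by
  rw [transfer_apply_eq_integral hA B C ω j k, ← integral_impulse_apply hA B C j k]
  refine (norm_integral_le_integral_norm _).trans_eq (setIntegral_congr_fun measurableSet_Ioi
    fun t ht => ?_)
  rw [norm_mul, Complex.norm_exp, Complex.norm_real, Real.norm_of_nonneg (hCeB t (le_of_lt ht) j k)]
  simp

theorem neg_mul_inv_mul_apply_nonneg (hA : A.Hurwitz) {B : Matrix (Fin n) (Fin m) ℝ}
    {C : Matrix (Fin r) (Fin n) ℝ} (hCeB : ∀ t : ℝ, 0 ≤ t → ∀ i j, 0 ≤ (C * exp (t • A) * B) i j)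
    (j : Fin r) (k : Fin m) : 0 ≤ -(C * A⁻¹ * B) j k :=
  integral_impulse_apply hA B C j k ▸
    setIntegral_nonneg measurableSet_Ioi fun t ht => hCeB t (le_of_lt ht) j k

end Matrix.Hurwitz

theorem Matrix.norm_mulVec_apply_le {l m : Type*} [Fintype m] {G : Matrix l m ℂ} {P : Matrix l m ℝ}
    (h : ∀ j k, ‖G j k‖ ≤ P j k) (w : m → ℂ) (j : l) :
    ‖(G *ᵥ w) j‖ ≤ (P *ᵥ fun k => ‖w k‖) j :=
  (norm_sum_le _ _).trans <| Finset.sum_le_sum fun k _ => by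
    rw [norm_mul]
    exact mul_le_mul_of_nonneg_right (h j k) (norm_nonneg _)

/-- For a Hurwitz `A` with `C e^{At} B ≥ 0` for `t ≥ 0` and `D ≥ 0`, the transfer matrix
`G(iω) = C (iωI - A)⁻¹ B + D` satisfies `|G(iω)ⱼₖ| ≤ G(0)ⱼₖ` where `G(0) = D - C A⁻¹ B`
has nonnegative entries, and consequently `|G(iω) w| ≤ G(0) |w|` entrywise for all
complex `w`. -/
theorem transfer_matrix_dominated_by_static_gain {n m r : ℕ}
    (A : Matrix (Fin n) (Fin n) ℝ) (B : Matrix (Fin n) (Fin m) ℝ)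
    (C : Matrix (Fin r) (Fin n) ℝ) (D : Matrix (Fin r) (Fin m) ℝ)
    (hA : A.Hurwitz)
    (hCeB : ∀ t : ℝ, 0 ≤ t → ∀ i j, 0 ≤ (C * NormedSpace.exp (t • A) * B) i j)
    (hD : ∀ i j, 0 ≤ D i j)
    (G : ℝ → Matrix (Fin r) (Fin m) ℂ)
    (hG : ∀ ω : ℝ, G ω = C.map Complex.ofReal *
        (((ω : ℂ) * Complex.I) • (1 : Matrix (Fin n) (Fin n) ℂ) - A.map Complex.ofReal)⁻¹ *
        B.map Complex.ofReal + D.map Complex.ofReal) :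
    (∀ j k, 0 ≤ (D - C * A⁻¹ * B) j k) ∧
    (∀ (ω : ℝ) (j : Fin r) (k : Fin m), ‖G ω j k‖ ≤ (D - C * A⁻¹ * B) j k) ∧
    (∀ (ω : ℝ) (w : Fin m → ℂ) (j : Fin r),
      ‖(G ω *ᵥ w) j‖ ≤ ((D - C * A⁻¹ * B) *ᵥ fun k => ‖w k‖) j) := by
  have hgain : ∀ ω j k, ‖G ω j k‖ ≤ (D - C * A⁻¹ * B) j k := fun ω j k => by
    rw [hG, Matrix.add_apply, Matrix.map_apply, Matrix.sub_apply]
    calc _ ≤ _ := norm_add_le _ _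
      _ ≤ -(C * A⁻¹ * B) j k + D j k := add_le_add (hA.norm_transfer_apply_le hCeB ω j k)
          (by simp [abs_of_nonneg (hD j k)])
      _ = _ := by ring
  refine ⟨fun j k => ?_, hgain, fun ω => norm_mulVec_apply_le (hgain ω)⟩
  rw [Matrix.sub_apply, sub_eq_add_neg]
  exact add_nonneg (hD j k) (hA.neg_mul_inv_mul_apply_nonneg hCeB j k)
end

section
/- Let A ∈ ℝ^{n×n} be Metzler and let B ∈ ℝ^{n×m}, C ∈ ℝ^{r×n}, D ∈ ℝ^{r×m} have nonnegative entries, and let γ > 0. Then the following are equivalent: (1) A is Hurwitz and (D − C A⁻¹ B)·𝟏 < γ·𝟏 entrywise (this condition expresses that the L∞-induced input-output gain of the system ẋ = Ax + Bw, y = Cx + Dw is less than γ, since for such positive systems the induced gain equals the static gain D − CA⁻¹B); (2) there exists ξ ∈ ℝ^n with ξ ≥ 0 such that Aξ + B·𝟏 < 0 and Cξ + D·𝟏 < γ·𝟏 entrywise. -/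
open Matrix

/-!
For Metzler `A` and large `s`, `s - A = σ - P` with `P ≥ 0` entrywise, so the resolvent
`R(s) = (s - A)⁻¹` is a Neumann series with nonnegative terms. If `A` is Hurwitz, every `s ≥ 0`
lies in the resolvent set, and `R(s - h) = ∑ₖ hᵏ R(s)ᵏ⁺¹` for small `h ≥ 0` carries
nonnegativity of `R(s)` downwards; since the nonnegative resolvents form a closed set, this
continuous induction reaches `s = 0`, i.e. `N = -A⁻¹ ≥ 0`. Conversely, a vector `ξ ≥ 0` with
`Aξ < 0` is strictly positive, and Gershgorin's theorem for `diag(ξ)⁻¹ A diag(ξ)` puts the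
spectrum of `A` in the open left half-plane.

The static gain is `D𝟏 + C N B𝟏`. Given the gain bound, `ξ = N (B𝟏 + ε𝟏)` is a certificate for
small `ε > 0`; given a certificate, `B𝟏 ≤ -Aξ` yields `N B𝟏 ≤ ξ`, so the gain is at most
`Cξ + D𝟏 < γ𝟏`.
-/

/-- Gershgorin's theorem for `diag(d)⁻¹ M diag(d)`, which has the same spectrum as `M`. -/
theorem exists_norm_sub_mul_le_of_mem_spectrum {K ι : Type*} [NormedField K] [Fintype ι]
    [DecidableEq ι] {M : Matrix ι ι K} {μ : K} (hμ : μ ∈ spectrum K M) {d : ι → K}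
    (hd : ∀ i, d i ≠ 0) :
    ∃ k, ‖μ - M k k‖ * ‖d k‖ ≤ ∑ j ∈ Finset.univ.erase k, ‖M k j‖ * ‖d j‖ := by
  let u : (Matrix ι ι K)ˣ := ⟨diagonal d, diagonal d⁻¹, by simp [hd], by simp [hd]⟩
  have hμ' : Module.End.HasEigenvalue (toLin' (u⁻¹ * M * u : Matrix ι ι K)) μ := by
    rwa [Module.End.hasEigenvalue_iff_mem_spectrum, spectrum_toLin', spectrum.units_conjugate']
  obtain ⟨k, hk⟩ := eigenvalue_mem_ball hμ'
  refine ⟨k, ?_⟩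
  have hentry : ∀ j, (u⁻¹ * M * u : Matrix ι ι K) k j = (d k)⁻¹ * M k j * d j := fun j => by
    simp [u, diagonal_mul, mul_diagonal]
  have hdiag : (d k)⁻¹ * M k k * d k = M k k := by field_simp [hd k]
  simp only [Metric.mem_closedBall, dist_eq_norm, hentry, hdiag, norm_mul, norm_inv] at hk
  have hdk : ‖d k‖ ≠ 0 := norm_ne_zero_iff.2 (hd k)
  calc ‖μ - M k k‖ * ‖d k‖
      ≤ (∑ j ∈ Finset.univ.erase k, ‖d k‖⁻¹ * ‖M k j‖ * ‖d j‖) * ‖d k‖ := by gcongr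
    _ = ∑ j ∈ Finset.univ.erase k, ‖M k j‖ * ‖d j‖ := by
      rw [Finset.sum_mul]
      exact Finset.sum_congr rfl fun j _ => by field_simp

lemma exists_pos_forall_add_mul_lt {ι : Type*} [Finite ι] {g c : ι → ℝ} {γ : ℝ}
    (h : ∀ i, g i < γ) : ∃ ε > 0, ∀ i, g i + ε * c i < γ := by
  have hnear : ∀ᶠ ε in nhdsWithin (0 : ℝ) (Set.Ioi 0), ∀ i, g i + ε * c i < γ :=
    Filter.eventually_all.2 fun i => nhdsWithin_le_nhds <|
      (show ContinuousAt (fun ε : ℝ => g i + ε * c i) 0 by fun_prop).eventually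
        (gt_mem_nhds (by simpa using h i))
  exact (hnear.and self_mem_nhdsWithin).exists.imp fun ε ⟨hε, hε₀⟩ => ⟨hε₀, hε⟩

namespace Matrix

section Nonneg

variable {α l m n : Type*}

lemma mul_apply_nonneg [Fintype m] [Semiring α] [PartialOrder α] [IsOrderedRing α]
    {M : Matrix l m α} {N : Matrix m n α} (hM : ∀ i j, 0 ≤ M i j) (hN : ∀ i j, 0 ≤ N i j)
    (i : l) (j : n) : 0 ≤ (M * N) i j :=
  Finset.sum_nonneg fun k _ => mul_nonneg (hM i k) (hN k j)

lemma mulVec_nonneg [Fintype m] [Semiring α] [PartialOrder α] [IsOrderedRing α]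
    {M : Matrix l m α} (hM : ∀ i j, 0 ≤ M i j) {v : m → α} (hv : 0 ≤ v) : 0 ≤ M *ᵥ v :=
  fun i => Finset.sum_nonneg fun j _ => mul_nonneg (hM i j) (hv j)

lemma mulVec_mono [Fintype m] [Ring α] [PartialOrder α] [IsOrderedRing α]
    {M : Matrix l m α} (hM : ∀ i j, 0 ≤ M i j) {v w : m → α} (h : v ≤ w) :
    M *ᵥ v ≤ M *ᵥ w := by
  have := mulVec_nonneg hM (sub_nonneg.2 h)
  rwa [mulVec_sub, sub_nonneg] at this

lemma algebraMap_apply_nonneg [Fintype n] [DecidableEq n] {r : ℝ} (hr : 0 ≤ r)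
    (i j : n) : 0 ≤ algebraMap ℝ (Matrix n n ℝ) r i j := by
  rw [algebraMap_matrix_apply]
  split_ifs <;> simp [hr]

lemma isClosed_setOf_nonneg_s8 [TopologicalSpace α] [Preorder α] [ClosedIciTopology α]
    [Zero α] : IsClosed {M : Matrix m n α | ∀ i j, 0 ≤ M i j} := by
  simp only [Set.ofPred_forall]
  exact isClosed_iInter fun i => isClosed_iInter fun j =>
    isClosed_Ici.preimage (f := fun M : Matrix m n α => M i j) (by fun_prop)

end Nonneg

variable {n : ℕ} {A : Matrix (Fin n) (Fin n) ℝ}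

lemma Hurwitz.mem_resolventSet (hH : A.Hurwitz) {s : ℝ} (hs : 0 ≤ s) :
    s ∈ resolventSet ℝ A := by
  by_contra h
  replace h : s ∈ spectrum ℝ A := h
  have hs' : (s : ℂ) ∈ spectrum ℂ (A.map Complex.ofReal) := by
    rw [mem_spectrum_iff_isRoot_charpoly] at h ⊢
    have := h.map (f := Complex.ofRealHom)
    rwa [← charpoly_map] at this
  exact (hH _ hs').not_ge (by simpa using hs)

lemma Hurwitz.isUnit_det (hH : A.Hurwitz) : IsUnit A.det :=
  (isUnit_iff_isUnit_det A).1 <| by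
    simpa [spectrum.mem_resolventSet_iff] using hH.mem_resolventSet le_rfl

section LinftyOpNorm

attribute [local instance] Matrix.linftyOpNormedAddCommGroup Matrix.linftyOpNormedRing
  Matrix.linftyOpNormedAlgebra

section Neumann

variable {ι : Type*} [Fintype ι] [DecidableEq ι]

lemma ringInverse_one_sub_nonneg {Z : Matrix ι ι ℝ} (hZ : ∀ i j, 0 ≤ Z i j)
    (hZ₁ : ‖Z‖ < 1) (i j : ι) : 0 ≤ Ring.inverse (1 - Z) i j :=
  (Pi.hasSum.1 (Pi.hasSum.1 (hasSum_geom_series_inverse Z hZ₁) i) j).nonneg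
    fun k => pow_apply_nonneg hZ k i j

/-- `(X - Y)⁻¹ = ∑ₖ (X⁻¹ Y)ᵏ X⁻¹`. -/
lemma ringInverse_sub_nonneg {X Y : Matrix ι ι ℝ} (hX : IsUnit X)
    (hXinv : ∀ i j, 0 ≤ Ring.inverse X i j) (hY : ∀ i j, 0 ≤ Y i j)
    (hXY : ‖Ring.inverse X * Y‖ < 1) (i j : ι) : 0 ≤ Ring.inverse (X - Y) i j := by
  have hfactor : X - Y = X * (1 - Ring.inverse X * Y) := by
    rw [mul_sub, mul_one, ← mul_assoc, Ring.mul_inverse_cancel X hX, one_mul]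
  rw [hfactor, ← nonsing_inv_eq_ringInverse, mul_inv_rev, nonsing_inv_eq_ringInverse,
    nonsing_inv_eq_ringInverse]
  exact mul_apply_nonneg (ringInverse_one_sub_nonneg (mul_apply_nonneg hXinv hY) hXY) hXinv i j

lemma resolvent_sub_nonneg {A : Matrix ι ι ℝ} {s h : ℝ} (hs : s ∈ resolventSet ℝ A)
    (hR : ∀ i j, 0 ≤ resolvent A s i j) (h₀ : 0 ≤ h) (h₁ : h * ‖resolvent A s‖ < 1)
    (i j : ι) : 0 ≤ resolvent A (s - h) i j := by
  rw [resolvent, map_sub, sub_right_comm]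
  refine ringInverse_sub_nonneg hs hR (algebraMap_apply_nonneg h₀) ?_ i j
  rwa [← Algebra.commutes, ← Algebra.smul_def, norm_smul, Real.norm_of_nonneg h₀]

end Neumann

lemma Metzler.exists_resolvent_nonneg (hA : A.Metzler) :
    ∃ S > (0 : ℝ), ∀ i j, 0 ≤ resolvent A S i j := by
  obtain ⟨c, hc⟩ := Finite.exists_le fun i => -A i i
  set P := A + algebraMap ℝ _ |c|
  have hP : ∀ i j, 0 ≤ P i j := by
    intro i j
    rcases eq_or_ne i j with rfl | hij
    · simp only [P, add_apply, algebraMap_matrix_apply, if_true, Algebra.algebraMap_self,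
        RingHom.id_apply]
      linarith [hc i, le_abs_self c]
    · simpa [P, algebraMap_matrix_apply, hij] using hA i j hij
  set σ := |c| + ‖P‖ + 1
  have hσ : 0 < σ := by positivity
  have hσunit : IsUnit (algebraMap ℝ (Matrix (Fin n) (Fin n) ℝ) σ) := hσ.ne'.isUnit.map _
  have hσinv : Ring.inverse (algebraMap ℝ (Matrix (Fin n) (Fin n) ℝ) σ) = algebraMap ℝ _ σ⁻¹ :=
    Ring.inverse_unit
      ((Units.mk0 σ hσ.ne').map (algebraMap ℝ (Matrix (Fin n) (Fin n) ℝ)).toMonoidHom)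
  refine ⟨‖P‖ + 1, by positivity, ?_⟩
  have hshift : algebraMap ℝ _ (‖P‖ + 1) - A = algebraMap ℝ (Matrix (Fin n) (Fin n) ℝ) σ - P := by
    simp only [P, σ, map_add]
    abel
  rw [resolvent, hshift]
  refine ringInverse_sub_nonneg hσunit (hσinv ▸ algebraMap_apply_nonneg (by positivity)) hP ?_
  rw [hσinv, ← Algebra.smul_def, norm_smul, Real.norm_of_nonneg (by positivity),
    inv_mul_lt_iff₀ hσ]
  linarith [abs_nonneg c]

lemma Metzler.neg_inv_nonneg (hA : A.Metzler) (hH : A.Hurwitz) : ∀ i j, 0 ≤ (-A⁻¹) i j := by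
  obtain ⟨S, hS, hRS⟩ := hA.exists_resolvent_nonneg
  set T := {s : ℝ | ∀ i j, 0 ≤ resolvent A s i j}
  have hclosed : IsClosed (T ∩ Set.Icc 0 S) := by
    rw [Set.inter_comm]
    refine ContinuousOn.preimage_isClosed_of_isClosed (fun s hs => ?_) isClosed_Icc
      isClosed_setOf_nonneg_s8
    exact (spectrum.hasDerivAt_resolvent_const_left
      (hH.mem_resolventSet hs.1)).continuousAt.continuousWithinAt
  have hT0 : (0 : ℝ) ∈ T := by
    refine hclosed.mem_of_ge_of_forall_exists_lt hRS hS.le fun s ⟨hsT, hs0, _⟩ => ?_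
    have hden : 0 < 1 + s * ‖resolvent A s‖ := by positivity
    -- small enough for `resolvent_sub_nonneg`, and `s - h` stays in `[0, s)`
    set h := s / (1 + s * ‖resolvent A s‖)
    have hh : 0 < h := div_pos hs0 hden
    have hhs : h ≤ s := div_le_self hs0.le (by nlinarith [norm_nonneg (resolvent A s)])
    refine ⟨s - h, resolvent_sub_nonneg (hH.mem_resolventSet hs0.le) hsT hh.le ?_,
      by linarith, by linarith⟩
    rw [div_mul_eq_mul_div, div_lt_one hden]
    linarith
  have hR0 : resolvent A (0 : ℝ) = -A⁻¹ := by
    rw [resolvent, map_zero, zero_sub, ← nonsing_inv_eq_ringInverse]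
    exact inv_eq_left_inv (by
      rw [neg_mul_neg, nonsing_inv_mul _ hH.isUnit_det])
  rwa [Set.mem_ofPred_eq, hR0] at hT0

end LinftyOpNorm

lemma Metzler.pos_of_mulVec_neg (hA : A.Metzler) {ξ : Fin n → ℝ} (hξ : 0 ≤ ξ)
    (hAξ : ∀ i, (A *ᵥ ξ) i < 0) (i : Fin n) : 0 < ξ i := by
  refine (hξ i).lt_of_ne fun hξi => (hAξ i).not_ge ?_
  change 0 ≤ ∑ j, A i j * ξ j
  refine Finset.sum_nonneg fun j _ => ?_
  rcases eq_or_ne i j with rfl | hij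
  · simp [← hξi]
  · exact mul_nonneg (hA i j hij) (hξ j)

lemma Metzler.hurwitz_of_mulVec_neg (hA : A.Metzler) {ξ : Fin n → ℝ} (hξ : 0 ≤ ξ)
    (hAξ : ∀ i, (A *ᵥ ξ) i < 0) : A.Hurwitz := by
  intro μ hμ
  have hξpos := hA.pos_of_mulVec_neg hξ hAξ
  obtain ⟨k, hk⟩ := exists_norm_sub_mul_le_of_mem_spectrum hμ (d := fun i => (ξ i : ℂ))
    fun i => Complex.ofReal_ne_zero.2 (hξpos i).ne'
  have hoff : ∑ j ∈ Finset.univ.erase k, ‖(A.map Complex.ofReal) k j‖ * ‖(ξ j : ℂ)‖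
      = ∑ j ∈ Finset.univ.erase k, A k j * ξ j := by
    refine Finset.sum_congr rfl fun j hj => ?_
    simp [abs_of_nonneg (hξ j), abs_of_nonneg (hA k j (Finset.ne_of_mem_erase hj).symm)]
  have hrow : A k k * ξ k + ∑ j ∈ Finset.univ.erase k, A k j * ξ j < 0 := by
    simpa [mulVec, dotProduct, Finset.add_sum_erase] using hAξ k
  rw [hoff] at hk
  simp only [map_apply, Complex.norm_real, Real.norm_of_nonneg (hξ k)] at hk
  have hre : μ.re - A k k ≤ ‖μ - A k k‖ := by
    simpa using Complex.re_le_norm (μ - A k k)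
  nlinarith [hξpos k]

lemma neg_inv_mulVec_le {ι : Type*} [Fintype ι] [DecidableEq ι] {A : Matrix ι ι ℝ}
    (hA : IsUnit A.det) (hN : ∀ i j, 0 ≤ (-A⁻¹) i j) {ξ b : ι → ℝ} (h : A *ᵥ ξ + b ≤ 0) :
    -A⁻¹ *ᵥ b ≤ ξ :=
  calc -A⁻¹ *ᵥ b ≤ -A⁻¹ *ᵥ (-(A *ᵥ ξ)) := mulVec_mono hN (le_neg_iff_add_nonpos_left.2 h)
    _ = ξ := by rw [mulVec_neg, neg_mulVec, neg_neg, mulVec_mulVec, nonsing_inv_mul _ hA,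
      one_mulVec]

end Matrix

theorem positive_system_linf_gain_iff_general {n m r : ℕ}
    (A : Matrix (Fin n) (Fin n) ℝ) (B : Matrix (Fin n) (Fin m) ℝ)
    (C : Matrix (Fin r) (Fin n) ℝ) (D : Matrix (Fin r) (Fin m) ℝ)
    (hA : A.Metzler) (hB : ∀ i j, 0 ≤ B i j) (hC : ∀ i j, 0 ≤ C i j)
    (γ : ℝ) :
    (A.Hurwitz ∧ ∀ i, ((D - C * A⁻¹ * B) *ᵥ fun _ => (1 : ℝ)) i < γ) ↔
    (∃ ξ : Fin n → ℝ, (∀ i, 0 ≤ ξ i) ∧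
      (∀ i, (A *ᵥ ξ + B *ᵥ fun _ => (1 : ℝ)) i < 0) ∧
      (∀ i, (C *ᵥ ξ + D *ᵥ fun _ => (1 : ℝ)) i < γ)) := by
  set b := B *ᵥ fun _ => (1 : ℝ)
  have hb : 0 ≤ b := mulVec_nonneg hB fun _ => zero_le_one
  have hgain :
      (D - C * A⁻¹ * B) *ᵥ (fun _ => (1 : ℝ)) = D *ᵥ (fun _ => 1) + C *ᵥ (-A⁻¹ *ᵥ b) := by
    rw [sub_mulVec, ← mulVec_mulVec, ← mulVec_mulVec, neg_mulVec, mulVec_neg, sub_eq_add_neg]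
  constructor
  · rintro ⟨hH, hγgain⟩
    have hdet := hH.isUnit_det
    obtain ⟨ε, hε, hεγ⟩ := exists_pos_forall_add_mul_lt (c := C *ᵥ (-A⁻¹ *ᵥ fun _ => 1)) hγgain
    refine ⟨-A⁻¹ *ᵥ (b + ε • fun _ => 1), mulVec_nonneg (hA.neg_inv_nonneg hH)
      (add_nonneg hb (smul_nonneg hε.le fun _ => zero_le_one)), fun i => ?_, fun i => ?_⟩
    · rw [mulVec_mulVec, mul_neg, mul_nonsing_inv _ hdet, neg_mulVec, one_mulVec]
      simp [hε]
    · convert hεγ i using 1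
      simp [hgain, mulVec_add, mulVec_smul]
      ring
  · rintro ⟨ξ, hξ, hAξ, hCξ⟩
    have hH := hA.hurwitz_of_mulVec_neg hξ fun i =>
      (le_add_of_nonneg_right (hb i)).trans_lt (hAξ i)
    have hNb := neg_inv_mulVec_le hH.isUnit_det
      (hA.neg_inv_nonneg hH) fun i => (hAξ i).le
    refine ⟨hH, fun i => lt_of_le_of_lt ?_ (hCξ i)⟩
    rw [hgain, Pi.add_apply, Pi.add_apply, add_comm]
    linarith [mulVec_mono hC hNb i]

/-- `L∞`-induced performance of a positive system: for Metzler `A` and nonnegative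
`B, C, D`, the matrix `A` is Hurwitz with static gain `(D - C A⁻¹ B) 𝟏 < γ 𝟏`
(equivalently, `L∞`-induced gain less than `γ`) iff there is `ξ ≥ 0` with
`Aξ + B𝟏 < 0` and `Cξ + D𝟏 < γ𝟏` entrywise. -/
theorem positive_system_linf_gain_iff {n m r : ℕ}
    (A : Matrix (Fin n) (Fin n) ℝ) (B : Matrix (Fin n) (Fin m) ℝ)
    (C : Matrix (Fin r) (Fin n) ℝ) (D : Matrix (Fin r) (Fin m) ℝ)
    (hA : A.Metzler) (hB : ∀ i j, 0 ≤ B i j) (hC : ∀ i j, 0 ≤ C i j)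
    (hD : ∀ i j, 0 ≤ D i j) (γ : ℝ) (hγ : 0 < γ) :
    (A.Hurwitz ∧ ∀ i, ((D - C * A⁻¹ * B) *ᵥ fun _ => (1 : ℝ)) i < γ) ↔
    (∃ ξ : Fin n → ℝ, (∀ i, 0 ≤ ξ i) ∧
      (∀ i, (A *ᵥ ξ + B *ᵥ fun _ => (1 : ℝ)) i < 0) ∧
      (∀ i, (C *ᵥ ξ + D *ᵥ fun _ => (1 : ℝ)) i < γ)) :=
  positive_system_linf_gain_iff_general A B C D hA hB hC γ
end

section
/- Let A ∈ ℝ^{n×n} be Metzler, B ∈ ℝ^{n×m} have nonnegative entries, and suppose ξ ∈ ℝ^n satisfies ξ ≥ 0 and Aξ + B·𝟏 < 0 entrywise. Let w : [0,∞) → ℝ^m be continuous with |w_k(t)| ≤ 1 for all k and all t ≥ 0, and let x : [0,∞) → ℝ^n be differentiable with x(0) = 0 and x′(t) = A x(t) + B w(t) for all t ≥ 0. Then −ξ < x(t) < ξ entrywise for all t ≥ 0. -/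
/-!
Each of the functions `t ↦ ± x t i - ξ i` is negative at `t = 0`. If one of them reached `0`, take
the first such time `T`: then `|x T| ≤ ξ` and, say, `x T i = ξ i`, and since `x s i < ξ i` for
`s < T` the derivative of `x i` at `T` is `≥ 0`. But as `A` is Metzler and `B ≥ 0`,
`ẋ i (T) = (A x T + B w T) i ≤ (A ξ + B 𝟏) i < 0`. The face `x i = -ξ i` is the same with
`x, w` replaced by `-x, -w`.
-/

open Matrix

open Filter Set Topology

theorem HasDerivAt.nonneg_of_eventually_le_left {f : ℝ → ℝ} {d T : ℝ} (hf : HasDerivAt f d T)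
    (hle : ∀ᶠ s in 𝓝[<] T, f s ≤ f T) : 0 ≤ d := by
  refine ge_of_tendsto ((hasDerivAt_iff_tendsto_slope.1 hf).mono_left (nhdsLT_le_nhdsNE T)) ?_
  filter_upwards [hle, self_mem_nhdsWithin] with s hs hsT
  rw [slope_def_field]
  exact div_nonneg_of_nonpos (sub_nonpos.2 hs) (sub_nonpos.2 (le_of_lt hsT))

theorem neg_of_hasDerivAt_neg_of_eq_zero {ι : Type*} [Finite ι] {g g' : ι → ℝ → ℝ} {a : ℝ}
    (hg : ∀ k t, a ≤ t → HasDerivAt (g k) (g' k t) t) (ha : ∀ k, g k a < 0)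
    (hzero : ∀ t, a < t → (∀ k, g k t ≤ 0) → ∀ i, g i t = 0 → g' i t < 0) :
    ∀ t, a ≤ t → ∀ k, g k t < 0 := by
  by_contra! ⟨t₀, ht₀, k₀, hk₀⟩
  set C := ⋃ k, Icc a t₀ ∩ g k ⁻¹' Ici 0
  have hC : IsClosed C := isClosed_iUnion_of_finite fun k =>
    ContinuousOn.preimage_isClosed_of_isClosed
      (fun t ht => (hg k t ht.1).continuousAt.continuousWithinAt) isClosed_Icc isClosed_Ici
  have hCbdd : BddBelow C := ⟨a, fun t ht => (mem_iUnion.1 ht).choose_spec.1.1⟩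
  obtain ⟨i, ⟨haT, hTt₀⟩, hi⟩ :=
    mem_iUnion.1 (hC.csInf_mem ⟨t₀, mem_iUnion.2 ⟨k₀, ⟨ht₀, le_rfl⟩, hk₀⟩⟩ hCbdd)
  set T := sInf C
  have before : ∀ s ∈ Ico a T, ∀ k, g k s < 0 := fun s hs k => by
    by_contra! h
    exact (csInf_le hCbdd (mem_iUnion.2 ⟨k, ⟨hs.1, hs.2.le.trans hTt₀⟩, h⟩)).not_gt hs.2
  have haT : a < T := haT.lt_of_ne fun h => (ha i).not_ge (h ▸ hi)
  have hnear : ∀ᶠ s in 𝓝[<] T, s ∈ Ico a T :=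
    mem_of_superset (Ioo_mem_nhdsLT haT) Ioo_subset_Ico_self
  have hle : ∀ k, g k T ≤ 0 := fun k =>
    le_of_tendsto ((hg k T haT.le).continuousAt.continuousWithinAt (s := Iio T))
      (hnear.mono fun s hs => (before s hs k).le)
  have hiT : g i T = 0 := (hle i).antisymm hi
  refine (hzero T haT hle i hiT).not_ge ((hg i T haT.le).nonneg_of_eventually_le_left ?_)
  exact hnear.mono fun s hs => (before s hs i).le.trans hiT.ge

theorem Matrix.Metzler.mulVec_apply_le {n : ℕ} {A : Matrix (Fin n) (Fin n) ℝ} (hA : A.Metzler)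
    {y z : Fin n → ℝ} (hyz : y ≤ z) {i : Fin n} (hi : y i = z i) :
    (A *ᵥ y) i ≤ (A *ᵥ z) i := by
  simp only [mulVec, dotProduct]
  refine Finset.sum_le_sum fun j _ => ?_
  rcases eq_or_ne j i with rfl | hji
  · rw [hi]
  · exact mul_le_mul_of_nonneg_left (hyz j) (hA i j hji.symm)

section Box

variable {n m : ℕ} {A : Matrix (Fin n) (Fin n) ℝ} {B : Matrix (Fin n) (Fin m) ℝ}
  {ξ : Fin n → ℝ}

theorem mulVec_add_mulVec_apply_neg_of_face (hA : A.Metzler) (hB : ∀ i j, 0 ≤ B i j)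
    (hAξ : ∀ i, (A *ᵥ ξ + B *ᵥ fun _ => (1 : ℝ)) i < 0) {y : Fin n → ℝ} {v : Fin m → ℝ}
    (hy : y ≤ ξ) {i : Fin n} (hi : y i = ξ i) (hv : ∀ k, v k ≤ 1) :
    (A *ᵥ y + B *ᵥ v) i < 0 :=
  calc (A *ᵥ y + B *ᵥ v) i
      ≤ (A *ᵥ ξ + B *ᵥ fun _ => (1 : ℝ)) i :=
        add_le_add (α := ℝ) (hA.mulVec_apply_le hy hi)
          (dotProduct_le_dotProduct_of_nonneg_left hv (hB i))
    _ < 0 := hAξ i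

theorem pos_of_mulVec_add_mulVec_one_neg (hA : A.Metzler) (hB : ∀ i j, 0 ≤ B i j)
    (hξ : ∀ i, 0 ≤ ξ i) (hAξ : ∀ i, (A *ᵥ ξ + B *ᵥ fun _ => (1 : ℝ)) i < 0) (i : Fin n) :
    0 < ξ i := by
  refine (hξ i).lt_of_ne fun h => ?_
  simpa using mulVec_add_mulVec_apply_neg_of_face hA hB hAξ (y := 0) (v := 0) hξ h
    fun _ => zero_le_one

end Box

theorem positive_system_state_bound_general {n m : ℕ}
    (A : Matrix (Fin n) (Fin n) ℝ) (B : Matrix (Fin n) (Fin m) ℝ)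
    (hA : A.Metzler) (hB : ∀ i j, 0 ≤ B i j)
    (ξ : Fin n → ℝ) (hξ : ∀ i, 0 ≤ ξ i)
    (hAξ : ∀ i, (A *ᵥ ξ + B *ᵥ fun _ => (1 : ℝ)) i < 0)
    (w : ℝ → Fin m → ℝ)
    (hw : ∀ t : ℝ, 0 ≤ t → ∀ k, |w t k| ≤ 1)
    (x : ℝ → Fin n → ℝ) (hx0 : x 0 = 0)
    (hx : ∀ t : ℝ, 0 ≤ t → HasDerivAt x (A *ᵥ x t + B *ᵥ w t) t) :
    ∀ t : ℝ, 0 ≤ t → ∀ i, -ξ i < x t i ∧ x t i < ξ i := by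
  have hξpos := pos_of_mulVec_add_mulVec_one_neg hA hB hξ hAξ
  have key := neg_of_hasDerivAt_neg_of_eq_zero (ι := Fin n ⊕ Fin n)
    (g := Sum.elim (fun i t => x t i - ξ i) (fun i t => -x t i - ξ i))
    (g' := Sum.elim (fun i t => (A *ᵥ x t + B *ᵥ w t) i)
      (fun i t => (A *ᵥ -x t + B *ᵥ -w t) i)) (a := 0) ?_ ?_ ?_
  · intro t ht i
    have hneg := key t ht
    simp only [Sum.forall, Sum.elim_inl, Sum.elim_inr] at hneg
    constructor <;> linarith [hneg.1 i, hneg.2 i]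
  · rintro (i | i) t ht
    · exact (hasDerivAt_pi.1 (hx t ht) i).sub_const _
    · simpa [mulVec_neg, neg_add, add_comm] using
        (hasDerivAt_pi.1 (hx t ht) i).neg.sub_const (ξ i)
  · rintro (i | i) <;> simp [hx0, hξpos i]
  · intro t ht hbox
    simp only [Sum.forall, Sum.elim_inl, Sum.elim_inr, sub_nonpos, sub_eq_zero] at hbox ⊢
    refine ⟨fun i hi => ?_, fun i hi => ?_⟩
    · exact mulVec_add_mulVec_apply_neg_of_face hA hB hAξ hbox.1 hi fun k =>
        (abs_le.1 (hw t ht.le k)).2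
    · exact mulVec_add_mulVec_apply_neg_of_face hA hB hAξ hbox.2 hi fun k =>
        neg_le.1 (abs_le.1 (hw t ht.le k)).1

/-- If `A` is Metzler, `B ≥ 0`, `ξ ≥ 0` and `Aξ + B𝟏 < 0` entrywise, then every solution
of `ẋ = Ax + Bw` with `x(0) = 0` and `‖w‖∞ ≤ 1` satisfies `-ξ < x(t) < ξ` entrywise for
all `t ≥ 0`. -/
theorem positive_system_state_bound {n m : ℕ}
    (A : Matrix (Fin n) (Fin n) ℝ) (B : Matrix (Fin n) (Fin m) ℝ)
    (hA : A.Metzler) (hB : ∀ i j, 0 ≤ B i j)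
    (ξ : Fin n → ℝ) (hξ : ∀ i, 0 ≤ ξ i)
    (hAξ : ∀ i, (A *ᵥ ξ + B *ᵥ fun _ => (1 : ℝ)) i < 0)
    (w : ℝ → Fin m → ℝ) (hw_cont : Continuous w)
    (hw : ∀ t : ℝ, 0 ≤ t → ∀ k, |w t k| ≤ 1)
    (x : ℝ → Fin n → ℝ) (hx0 : x 0 = 0)
    (hx : ∀ t : ℝ, 0 ≤ t → HasDerivAt x (A *ᵥ x t + B *ᵥ w t) t) :
    ∀ t : ℝ, 0 ≤ t → ∀ i, -ξ i < x t i ∧ x t i < ξ i :=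
  positive_system_state_bound_general A B hA hB ξ hξ hAξ w hw x hx0 hx
end

section
/- Let A ∈ ℝ^{n×n} be Metzler, let B ∈ ℝ^{n×m}, C ∈ ℝ^{r×n}, D ∈ ℝ^{r×m} have nonnegative entries, let γ > 0, and suppose p ∈ ℝ^n satisfies p ≥ 0, Aᵀp + Cᵀ·𝟏 < 0 and Bᵀp + Dᵀ·𝟏 < γ·𝟏 entrywise. Let w : [0,∞) → ℝ^m be continuous and let x : [0,∞) → ℝ^n be differentiable with x(0) = 0 and x′(t) = A x(t) + B w(t). Then for every t ≥ 0: pᵀ|x(t)| + ∫₀ᵗ Σ_k |(C x(τ) + D w(τ))_k| dτ ≤ γ ∫₀ᵗ Σ_k |w_k(τ)| dτ, where |x(t)| denotes the entrywise absolute value. -/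
open Matrix

/-!
Smooth the storage function `pᵀ|x|` to `V_ε(x) = ∑ pᵢ √(xᵢ² + ε²)`. Along a trajectory
`V̇_ε = ∑ pᵢ σᵢ ẋᵢ` with `|σᵢ| ≤ 1` and `σᵢ xᵢ ≥ |xᵢ| - ε`. Because `A` is Metzler and
`B, C, D ≥ 0`, the off-diagonal terms are dominated by `A|x|` and `B|w|`, while the diagonal
(where `Aᵢᵢ` may be negative) costs at most `ε |Aᵢᵢ|`. The two inequalities on `p` then give
`V̇_ε + ∑ |Cx + Dw| ≤ γ ∑ |w| + ε pᵀ|diag A|`; integrate and let `ε → 0`.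
-/

open Filter Topology Set MeasureTheory

noncomputable def smoothAbs (ε u : ℝ) : ℝ := √(u ^ 2 + ε ^ 2)

lemma abs_le_smoothAbs (ε u : ℝ) : |u| ≤ smoothAbs ε u :=
  Real.abs_le_sqrt (le_add_of_nonneg_right (sq_nonneg ε))

lemma smoothAbs_le_abs_add {ε : ℝ} (hε : 0 ≤ ε) (u : ℝ) : smoothAbs ε u ≤ |u| + ε := by
  refine Real.sqrt_le_iff.2 ⟨by positivity, ?_⟩
  nlinarith [sq_abs u, abs_nonneg u]

lemma smoothAbs_pos {ε : ℝ} (hε : ε ≠ 0) (u : ℝ) : 0 < smoothAbs ε u := by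
  unfold smoothAbs; positivity

lemma hasDerivAt_smoothAbs {ε : ℝ} (hε : ε ≠ 0) (u : ℝ) :
    HasDerivAt (smoothAbs ε) (u / smoothAbs ε u) u := by
  have hsq : HasDerivAt (fun v : ℝ => v ^ 2 + ε ^ 2) (2 * u) u := by
    simpa using (hasDerivAt_pow 2 u).add_const (ε ^ 2)
  exact (hsq.sqrt (by positivity)).congr_deriv (mul_div_mul_left _ _ two_ne_zero)

lemma abs_div_smoothAbs_le_one (ε u : ℝ) : |u / smoothAbs ε u| ≤ 1 := by
  have hs : 0 ≤ smoothAbs ε u := (abs_nonneg u).trans (abs_le_smoothAbs ε u)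
  rw [abs_div, abs_of_nonneg hs]
  exact div_le_one_of_le₀ (abs_le_smoothAbs ε u) hs

lemma abs_sub_le_div_smoothAbs_mul {ε : ℝ} (hε : 0 < ε) (u : ℝ) :
    |u| - ε ≤ u / smoothAbs ε u * u := by
  have hs := smoothAbs_pos hε.ne' u
  have hεs : ε ≤ smoothAbs ε u := Real.le_sqrt_of_sq_le (le_add_of_nonneg_left (sq_nonneg u))
  have hε2 : ε ^ 2 / smoothAbs ε u ≤ ε := by
    rw [div_le_iff₀ hs]
    nlinarith
  calc |u| - ε ≤ smoothAbs ε u - ε := by linarith [abs_le_smoothAbs ε u]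
    _ ≤ smoothAbs ε u - ε ^ 2 / smoothAbs ε u := by linarith
    _ = u / smoothAbs ε u * u := by
      have hsq : smoothAbs ε u ^ 2 = u ^ 2 + ε ^ 2 := Real.sq_sqrt (by positivity)
      field_simp
      linarith

lemma mul_le_abs_of_abs_le_one {R : Type*} [Ring R] [LinearOrder R] [IsStrictOrderedRing R]
    {a : R} (ha : |a| ≤ 1) (b : R) : a * b ≤ |b| :=
  (le_abs_self _).trans (by rw [abs_mul]; exact mul_le_of_le_one_left (abs_nonneg _) ha)

theorem Matrix.abs_mulVec_le_mulVec_abs {R ι κ : Type*} [CommRing R] [LinearOrder R]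
    [IsStrictOrderedRing R] [Fintype κ] {M : Matrix ι κ R} (hM : ∀ i j, 0 ≤ M i j)
    (v : κ → R) : |M *ᵥ v| ≤ M *ᵥ |v| := fun i => by
  simp only [Pi.abs_apply, mulVec, dotProduct]
  refine (Finset.abs_sum_le_sum_abs _ _).trans_eq (Finset.sum_congr rfl fun j _ => ?_)
  rw [abs_mul, abs_of_nonneg (hM i j)]

theorem Matrix.Metzler.mul_mulVec_le {n : ℕ} {A : Matrix (Fin n) (Fin n) ℝ} (hA : A.Metzler)
    {ε : ℝ} {σ v : Fin n → ℝ} (hσ : ∀ i, |σ i| ≤ 1) (hσv : ∀ i, |v i| - ε ≤ σ i * v i)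
    (i : Fin n) : σ i * (A *ᵥ v) i ≤ (A *ᵥ |v|) i + ε * |A i i| := by
  have hσle : ∀ j, σ i * v j ≤ |v j| := fun j => mul_le_abs_of_abs_le_one (hσ i) (v j)
  have hdiag : σ i * (A i i * v i) ≤ A i i * |v i| + ε * |A i i| := by
    rcases le_total 0 (A i i) with h | h
    · have hε : 0 ≤ ε := by linarith [hσv i, hσle i]
      nlinarith [mul_le_mul_of_nonneg_left (hσle i) h, abs_nonneg (A i i)]
    · rw [abs_of_nonpos h]
      nlinarith [mul_le_mul_of_nonpos_left (hσv i) h]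
  have hoff : ∀ j ∈ Finset.univ.erase i, σ i * (A i j * v j) ≤ A i j * |v j| := fun j hj => by
    rw [mul_left_comm]
    exact mul_le_mul_of_nonneg_left (hσle j) (hA i j (Finset.ne_of_mem_erase hj).symm)
  simp only [mulVec, dotProduct, Pi.abs_apply, Finset.mul_sum]
  rw [← Finset.add_sum_erase _ _ (Finset.mem_univ i),
    ← Finset.add_sum_erase _ _ (Finset.mem_univ i)]
  linarith [Finset.sum_le_sum hoff]

lemma le_of_forall_pos_le_add_mul {a b c : ℝ} (h : ∀ ε > 0, a ≤ b + ε * c) : a ≤ b := by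
  have hlim : Tendsto (fun ε => b + ε * c) (𝓝[>] 0) (𝓝 b) := by
    have hcont : Continuous fun ε : ℝ => b + ε * c := by fun_prop
    simpa using (hcont.tendsto 0).mono_left nhdsWithin_le_nhds
  exact ge_of_tendsto hlim (eventually_nhdsWithin_of_forall h)

section

variable {n m r : ℕ} {A : Matrix (Fin n) (Fin n) ℝ} {B : Matrix (Fin n) (Fin m) ℝ}
  {C : Matrix (Fin r) (Fin n) ℝ} {D : Matrix (Fin r) (Fin m) ℝ} {γ : ℝ} {p : Fin n → ℝ}
  {w : ℝ → Fin m → ℝ} {x : ℝ → Fin n → ℝ} {t : ℝ}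

theorem dissipation_rate_le (hA : A.Metzler) (hB : ∀ i j, 0 ≤ B i j) (hC : ∀ i j, 0 ≤ C i j)
    (hD : ∀ i j, 0 ≤ D i j) (hp : 0 ≤ p) (hp1 : Aᵀ *ᵥ p + Cᵀ *ᵥ 1 ≤ 0)
    (hp2 : Bᵀ *ᵥ p + Dᵀ *ᵥ 1 ≤ γ • 1) {ε : ℝ} {σ v : Fin n → ℝ} (hσ : ∀ i, |σ i| ≤ 1)
    (hσv : ∀ i, |v i| - ε ≤ σ i * v i) (u : Fin m → ℝ) :
    p ⬝ᵥ (σ * (A *ᵥ v + B *ᵥ u)) + 1 ⬝ᵥ |C *ᵥ v + D *ᵥ u| ≤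
      γ * (1 ⬝ᵥ |u|) + ε * (p ⬝ᵥ |diag A|) := by
  have hσBu : ∀ i, σ i * (B *ᵥ u) i ≤ (B *ᵥ |u|) i := fun i =>
    (mul_le_abs_of_abs_le_one (hσ i) _).trans (abs_mulVec_le_mulVec_abs hB u i)
  have hrate : σ * (A *ᵥ v + B *ᵥ u) ≤ A *ᵥ |v| + ε • |diag A| + B *ᵥ |u| := fun i => by
    simp only [Pi.mul_apply, Pi.add_apply, Pi.smul_apply, smul_eq_mul, Pi.abs_apply, diag_apply,
      mul_add]
    linarith [hA.mul_mulVec_le hσ hσv i, hσBu i]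
  have hout : |C *ᵥ v + D *ᵥ u| ≤ C *ᵥ |v| + D *ᵥ |u| :=
    (abs_add_le _ _).trans (add_le_add (abs_mulVec_le_mulVec_abs hC v)
      (abs_mulVec_le_mulVec_abs hD u))
  calc p ⬝ᵥ (σ * (A *ᵥ v + B *ᵥ u)) + 1 ⬝ᵥ |C *ᵥ v + D *ᵥ u|
      ≤ p ⬝ᵥ (A *ᵥ |v| + ε • |diag A| + B *ᵥ |u|) + 1 ⬝ᵥ (C *ᵥ |v| + D *ᵥ |u|) :=
        add_le_add (dotProduct_le_dotProduct_of_nonneg_left hrate hp)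
          (dotProduct_le_dotProduct_of_nonneg_left hout zero_le_one)
    _ = (Aᵀ *ᵥ p + Cᵀ *ᵥ 1) ⬝ᵥ |v| + (Bᵀ *ᵥ p + Dᵀ *ᵥ 1) ⬝ᵥ |u| + ε * (p ⬝ᵥ |diag A|) := by
        simp only [dotProduct_add, add_dotProduct, dotProduct_mulVec, mulVec_transpose,
          dotProduct_smul, smul_eq_mul]
        ring
    _ ≤ 0 ⬝ᵥ |v| + (γ • 1) ⬝ᵥ |u| + ε * (p ⬝ᵥ |diag A|) := by
        gcongr
        · exact dotProduct_le_dotProduct_of_nonneg_right hp1 (abs_nonneg v)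
        · exact dotProduct_le_dotProduct_of_nonneg_right hp2 (abs_nonneg u)
    _ = γ * (1 ⬝ᵥ |u|) + ε * (p ⬝ᵥ |diag A|) := by simp

theorem l1_dissipation_le_add_mul (hA : A.Metzler) (hB : ∀ i j, 0 ≤ B i j)
    (hC : ∀ i j, 0 ≤ C i j) (hD : ∀ i j, 0 ≤ D i j) (hp : 0 ≤ p)
    (hp1 : Aᵀ *ᵥ p + Cᵀ *ᵥ 1 ≤ 0) (hp2 : Bᵀ *ᵥ p + Dᵀ *ᵥ 1 ≤ γ • 1) (hw : Continuous w)
    (hx : ∀ s, 0 ≤ s → HasDerivAt x (A *ᵥ x s + B *ᵥ w s) s) (ht : 0 ≤ t) {ε : ℝ} (hε : 0 < ε) :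
    p ⬝ᵥ |x t| + ∫ τ in 0..t, ∑ k, |(C *ᵥ x τ + D *ᵥ w τ) k| ≤
      p ⬝ᵥ |x 0| + γ * (∫ τ in 0..t, ∑ k, |w τ k|) + ε * (p ⬝ᵥ 1 + t * (p ⬝ᵥ |diag A|)) := by
  set V : ℝ → ℝ := fun s => p ⬝ᵥ fun i => smoothAbs ε (x s i)
  set σ : ℝ → Fin n → ℝ := fun s i => x s i / smoothAbs ε (x s i)
  have hV : ∀ s, 0 ≤ s → HasDerivAt V (p ⬝ᵥ (σ s * (A *ᵥ x s + B *ᵥ w s))) s := fun s hs =>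
    HasDerivAt.fun_sum fun i _ =>
      ((hasDerivAt_smoothAbs hε.ne' _).comp s (hasDerivAt_pi.1 (hx s hs) i)).const_mul (p i)
  have hxc : ContinuousOn x (Icc 0 t) := fun s hs => (hx s hs.1).continuousAt.continuousWithinAt
  have hout : ContinuousOn (fun τ => ∑ k, |(C *ᵥ x τ + D *ᵥ w τ) k|) (Icc 0 t) := by fun_prop
  have hin : Continuous (fun τ => ∑ k, |w τ k|) := by fun_prop
  have hrate : ∀ s ∈ Ioo 0 t, p ⬝ᵥ (σ s * (A *ᵥ x s + B *ᵥ w s)) ≤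
      γ * ∑ k, |w s k| - ∑ k, |(C *ᵥ x s + D *ᵥ w s) k| + ε * (p ⬝ᵥ |diag A|) := fun s _ => by
    have := dissipation_rate_le hA hB hC hD hp hp1 hp2
      (fun i => abs_div_smoothAbs_le_one ε (x s i))
      (fun i => abs_sub_le_div_smoothAbs_mul hε (x s i)) (w s)
    simp only [one_dotProduct, Pi.abs_apply] at this
    linarith
  have hFTC := intervalIntegral.sub_le_integral_of_hasDeriv_right_of_le ht
    (fun s hs => (hV s hs.1).continuousAt.continuousWithinAt)
    (fun s hs => (hV s hs.1.le).hasDerivWithinAt) (ContinuousOn.integrableOn_Icc (by fun_prop))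
    hrate
  have hout_int : IntervalIntegrable _ volume 0 t := hout.intervalIntegrable_of_Icc ht
  have hin_int : IntervalIntegrable _ volume 0 t := (hin.intervalIntegrable 0 t).const_mul γ
  rw [intervalIntegral.integral_add (hin_int.sub hout_int) intervalIntegrable_const,
    intervalIntegral.integral_sub hin_int hout_int, intervalIntegral.integral_const_mul,
    intervalIntegral.integral_const] at hFTC
  have hVt : p ⬝ᵥ |x t| ≤ V t :=
    dotProduct_le_dotProduct_of_nonneg_left (fun i => abs_le_smoothAbs ε (x t i)) hp
  have hV0 : V 0 ≤ p ⬝ᵥ (|x 0| + ε • 1) :=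
    dotProduct_le_dotProduct_of_nonneg_left
      (fun i => by simpa using smoothAbs_le_abs_add hε.le (x 0 i)) hp
  simp only [dotProduct_add, dotProduct_smul, smul_eq_mul] at hV0
  simp only [smul_eq_mul, sub_zero] at hFTC
  linarith [mul_add ε (p ⬝ᵥ 1) (t * (p ⬝ᵥ |diag A|)), mul_left_comm ε t (p ⬝ᵥ |diag A|)]

theorem l1_dissipation_le (hA : A.Metzler) (hB : ∀ i j, 0 ≤ B i j)
    (hC : ∀ i j, 0 ≤ C i j) (hD : ∀ i j, 0 ≤ D i j) (hp : 0 ≤ p)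
    (hp1 : Aᵀ *ᵥ p + Cᵀ *ᵥ 1 ≤ 0) (hp2 : Bᵀ *ᵥ p + Dᵀ *ᵥ 1 ≤ γ • 1) (hw : Continuous w)
    (hx : ∀ s, 0 ≤ s → HasDerivAt x (A *ᵥ x s + B *ᵥ w s) s) (ht : 0 ≤ t) :
    p ⬝ᵥ |x t| + ∫ τ in 0..t, ∑ k, |(C *ᵥ x τ + D *ᵥ w τ) k| ≤
      p ⬝ᵥ |x 0| + γ * ∫ τ in 0..t, ∑ k, |w τ k| :=
  le_of_forall_pos_le_add_mul fun _ hε =>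
    l1_dissipation_le_add_mul hA hB hC hD hp hp1 hp2 hw hx ht hε

end

theorem positive_system_l1_dissipation_general {n m r : ℕ}
    (A : Matrix (Fin n) (Fin n) ℝ) (B : Matrix (Fin n) (Fin m) ℝ)
    (C : Matrix (Fin r) (Fin n) ℝ) (D : Matrix (Fin r) (Fin m) ℝ)
    (hA : A.Metzler) (hB : ∀ i j, 0 ≤ B i j) (hC : ∀ i j, 0 ≤ C i j)
    (hD : ∀ i j, 0 ≤ D i j) (γ : ℝ)
    (p : Fin n → ℝ) (hp : ∀ i, 0 ≤ p i)
    (hp1 : ∀ i, (Aᵀ *ᵥ p + Cᵀ *ᵥ fun _ => (1 : ℝ)) i < 0)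
    (hp2 : ∀ i, (Bᵀ *ᵥ p + Dᵀ *ᵥ fun _ => (1 : ℝ)) i < γ)
    (w : ℝ → Fin m → ℝ) (hw_cont : Continuous w)
    (x : ℝ → Fin n → ℝ) (hx0 : x 0 = 0)
    (hx : ∀ t : ℝ, 0 ≤ t → HasDerivAt x (A *ᵥ x t + B *ᵥ w t) t) :
    ∀ t : ℝ, 0 ≤ t →
      (∑ i, p i * |x t i|) + (∫ τ in (0:ℝ)..t, ∑ k, |(C *ᵥ x τ + D *ᵥ w τ) k|) ≤
        γ * ∫ τ in (0:ℝ)..t, ∑ k, |w τ k| := by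
  intro t ht
  have h := l1_dissipation_le hA hB hC hD hp (fun i => (hp1 i).le)
    (fun i => (hp2 i).le.trans_eq (mul_one γ).symm) hw_cont hx ht
  rwa [hx0, abs_zero, dotProduct_zero, zero_add] at h

/-- Dissipation inequality certifying the `L₁`-induced gain bound: if `A` is Metzler,
`B, C, D ≥ 0`, and `p ≥ 0` satisfies `Aᵀp + Cᵀ𝟏 < 0` and `Bᵀp + Dᵀ𝟏 < γ𝟏` entrywise,
then every solution of `ẋ = Ax + Bw`, `x(0) = 0`, satisfies
`pᵀ|x(t)| + ∫₀ᵗ Σₖ|(Cx + Dw)ₖ| ≤ γ ∫₀ᵗ Σₖ|wₖ|` for all `t ≥ 0`. -/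
theorem positive_system_l1_dissipation {n m r : ℕ}
    (A : Matrix (Fin n) (Fin n) ℝ) (B : Matrix (Fin n) (Fin m) ℝ)
    (C : Matrix (Fin r) (Fin n) ℝ) (D : Matrix (Fin r) (Fin m) ℝ)
    (hA : A.Metzler) (hB : ∀ i j, 0 ≤ B i j) (hC : ∀ i j, 0 ≤ C i j)
    (hD : ∀ i j, 0 ≤ D i j) (γ : ℝ) (hγ : 0 < γ)
    (p : Fin n → ℝ) (hp : ∀ i, 0 ≤ p i)
    (hp1 : ∀ i, (Aᵀ *ᵥ p + Cᵀ *ᵥ fun _ => (1 : ℝ)) i < 0)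
    (hp2 : ∀ i, (Bᵀ *ᵥ p + Dᵀ *ᵥ fun _ => (1 : ℝ)) i < γ)
    (w : ℝ → Fin m → ℝ) (hw_cont : Continuous w)
    (x : ℝ → Fin n → ℝ) (hx0 : x 0 = 0)
    (hx : ∀ t : ℝ, 0 ≤ t → HasDerivAt x (A *ᵥ x t + B *ᵥ w t) t) :
    ∀ t : ℝ, 0 ≤ t →
      (∑ i, p i * |x t i|) + (∫ τ in (0:ℝ)..t, ∑ k, |(C *ᵥ x τ + D *ᵥ w τ) k|) ≤
        γ * ∫ τ in (0:ℝ)..t, ∑ k, |w τ k| :=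
  positive_system_l1_dissipation_general A B C D hA hB hC hD γ p hp hp1 hp2 w hw_cont x hx0 hx
end

section
/- Let M ∈ ℝ^{n×n} be a Metzler matrix and let X = (x_{ij}) ∈ ℝ^{n×n} be a symmetric matrix satisfying x_{ii} ≥ 0 for all i and x_{ij}² ≤ x_{ii} x_{jj} for all i, j. Define the vector x = (√x_{11}, …, √x_{nn}) ∈ ℝ^n. Then xᵀ M x ≥ trace(M X). In particular, since every positive semidefinite X satisfies these conditions, the inequality holds for every positive semidefinite X; and conversely, for any x ∈ ℝ^n with x ≥ 0, the rank-one matrix X = x xᵀ is positive semidefinite with trace(M X) = xᵀ M x. -/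
open Matrix

/-! On the diagonal, `trace (M X)` and `xᵀ M x` with `x = (√X₁₁, …, √Xₙₙ)` have the same terms
`M i i * X i i`. Off the diagonal, `X j i ≤ |X j i| ≤ √(X i i * X j j) = x i * x j`, and since
`M` is Metzler these entries carry nonnegative weights `M i j`, so the trace is at most the
quadratic form. Positive semidefinite matrices satisfy the hypotheses because their `2 × 2`
principal minors are nonnegative. -/

namespace Matrix

theorem PosSemidef.apply_sq_le_mul_diag {ι : Type*} [Fintype ι] {X : Matrix ι ι ℝ}
    (hX : X.PosSemidef) (i j : ι) : X i j ^ 2 ≤ X i i * X j j := by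
  have hminor := (hX.submatrix ![i, j]).det_nonneg
  have hsymm : X j i = X i j := (isHermitian_iff_isSymm.mp hX.isHermitian).apply i j
  simp only [det_fin_two, submatrix_apply, cons_val_zero, cons_val_one, hsymm] at hminor
  nlinarith

theorem Metzler.trace_mul_le_dotProduct_mulVec {n : ℕ} {M X : Matrix (Fin n) (Fin n) ℝ}
    (hM : M.Metzler) {x : Fin n → ℝ} (hdiag : ∀ i, X i i = x i * x i)
    (hoff : ∀ i j, i ≠ j → X j i ≤ x i * x j) : (M * X).trace ≤ x ⬝ᵥ M *ᵥ x := by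
  simp only [trace, diag, mul_apply, dotProduct, mulVec, Finset.mul_sum]
  refine Finset.sum_le_sum fun i _ => Finset.sum_le_sum fun j _ => ?_
  rcases eq_or_ne i j with rfl | hij
  · exact (by rw [hdiag]; ring : M i i * X i i = x i * (M i i * x i)).le
  · calc M i j * X j i ≤ M i j * (x i * x j) :=
          mul_le_mul_of_nonneg_left (hoff i j hij) (hM i j hij)
      _ = x i * (M i j * x j) := by ring

theorem trace_mul_vecMulVec_self {ι : Type*} [Fintype ι] (M : Matrix ι ι ℝ) (x : ι → ℝ) :
    (M * vecMulVec x x).trace = x ⬝ᵥ M *ᵥ x := by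
  rw [mul_vecMulVec, trace_vecMulVec, dotProduct_comm]

end Matrix

theorem Real.le_sqrt_mul_sqrt_of_sq_le {a b c : ℝ} (ha : 0 ≤ a) (h : c ^ 2 ≤ a * b) :
    c ≤ √a * √b :=
  (le_abs_self c).trans <| (Real.sqrt_mul ha b) ▸ Real.abs_le_sqrt h

/-- Positive quadratic programming relaxation (key step of Proposition 3 of the paper):
for a Metzler `M` and any symmetric `X` with `Xᵢᵢ ≥ 0` and `Xᵢⱼ² ≤ Xᵢᵢ Xⱼⱼ`, the vector
`x = (√X₁₁, …, √Xₙₙ)` satisfies `xᵀMx ≥ trace(MX)`. In particular this holds for every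
positive semidefinite `X`; conversely, for `x ≥ 0` the matrix `X = xxᵀ` is positive
semidefinite with `trace(MX) = xᵀMx`. -/
theorem metzler_trace_le_sqrt_diag_quadform {n : ℕ}
    (M : Matrix (Fin n) (Fin n) ℝ) (hM : M.Metzler) :
    (∀ X : Matrix (Fin n) (Fin n) ℝ, Xᵀ = X → (∀ i, 0 ≤ X i i) →
      (∀ i j, (X i j) ^ 2 ≤ X i i * X j j) →
      (M * X).trace ≤ (fun i => Real.sqrt (X i i)) ⬝ᵥ M *ᵥ fun i => Real.sqrt (X i i)) ∧
    (∀ X : Matrix (Fin n) (Fin n) ℝ, X.PosSemidef →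
      (M * X).trace ≤ (fun i => Real.sqrt (X i i)) ⬝ᵥ M *ᵥ fun i => Real.sqrt (X i i)) ∧
    (∀ x : Fin n → ℝ, (∀ i, 0 ≤ x i) →
      (Matrix.vecMulVec x x).PosSemidef ∧
      (M * Matrix.vecMulVec x x).trace = x ⬝ᵥ M *ᵥ x) := by
  have relaxation : ∀ X : Matrix (Fin n) (Fin n) ℝ, (∀ i, 0 ≤ X i i) →
      (∀ i j, (X i j) ^ 2 ≤ X i i * X j j) →
      (M * X).trace ≤ (fun i => √(X i i)) ⬝ᵥ M *ᵥ fun i => √(X i i) := fun X hdiag hsq =>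
    hM.trace_mul_le_dotProduct_mulVec (fun i => (Real.mul_self_sqrt (hdiag i)).symm)
      fun i j _ => Real.le_sqrt_mul_sqrt_of_sq_le (hdiag i) ((hsq j i).trans_eq (mul_comm _ _))
  refine ⟨fun X _ => relaxation X, fun X hX => relaxation X (fun _ => hX.diag_nonneg)
    hX.apply_sq_le_mul_diag, fun x _ => ⟨?_, trace_mul_vecMulVec_self M x⟩⟩
  simpa using posSemidef_vecMulVec_self_star x
end
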